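/- arXiv:1508.07814 — 8 statements merged into one kernel-verified Lean document; each statement's English description precedes it below -/
import Mathlib

section
/- Let f : (0,1) → (0,1) be the projective unsorted Farey map, f(x) = x/(1−x) for 0 < x ≤ 1/2 and f(x) = 2 − 1/x for 1/2 < x < 1. Let μ be the measure on ℝ obtained by restricting Lebesgue measure to the interval (0,1) and taking the density x ↦ 1/(x(1−x)). Then the pushforward of μ under f equals μ (i.e. μ is f-invariant). -/
open MeasureTheory Set

/-- The projective unsorted Farey map on `(0,1)`:
`f(x) = x/(1-x)` for `0 < x ≤ 1/2` and `f(x) = 2 - 1/x` for `1/2 < x < 1`. -/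
noncomputable def fareyProj : ℝ → ℝ := fun x =>
  if x ≤ 1 / 2 then x / (1 - x) else 2 - 1 / x

/-- Lebesgue measure restricted to `(0,1)` with density `x ↦ 1/(x(1-x))`. -/
noncomputable def fareyMeasure : Measure ℝ :=
  (volume.restrict (Ioo (0:ℝ) 1)).withDensity fun x => ENNReal.ofReal (1 / (x * (1 - x)))

/-!
On `(0,1/2)` and `(1/2,1)` the map is a bijection onto `(0,1)`, with inverse branches
`y ↦ y/(1+y)` and `y ↦ 1/(2-y)`; the remaining point `1/2` is Lebesgue-null. By the change of
variables formula along the two branches, invariance of the density `ρ(x) = 1/(x(1-x))` reduces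
to the transfer-operator identity `|g₁'| ρ∘g₁ + |g₂'| ρ∘g₂ = ρ`, whose two terms are `1/y` and
`1/(1-y)`.
-/

theorem Set.InvOn.image_inter_eq_preimage_inter {α β : Type*} {f : α → β} {g : β → α}
    {U : Set β} {V : Set α} (h : InvOn f g U V) (hg : MapsTo g U V) (hf : MapsTo f V U)
    (s : Set β) : g '' (s ∩ U) = f ⁻¹' s ∩ V := by
  rw [h.1.image_inter', (h.bijOn hg hf).image_eq]

noncomputable def fareyBranchLeft (y : ℝ) : ℝ := y / (1 + y)

noncomputable def fareyBranchRight (y : ℝ) : ℝ := (2 - y)⁻¹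

lemma fareyProj_of_le {x : ℝ} (hx : x ≤ 1 / 2) : fareyProj x = x / (1 - x) := if_pos hx

lemma fareyProj_of_lt {x : ℝ} (hx : 1 / 2 < x) : fareyProj x = 2 - 1 / x := if_neg hx.not_ge

lemma measurable_fareyProj : Measurable fareyProj :=
  Measurable.ite measurableSet_Iic (measurable_id.div (measurable_const.sub measurable_id))
    (measurable_const.sub (measurable_const.div measurable_id))

lemma mapsTo_fareyBranchLeft : MapsTo fareyBranchLeft (Ioo 0 1) (Ioo 0 (1 / 2)) := by
  rintro y ⟨hy0, hy1⟩
  constructor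
  · unfold fareyBranchLeft; positivity
  · rw [fareyBranchLeft, div_lt_iff₀ (by linarith)]; linarith

lemma mapsTo_fareyBranchRight : MapsTo fareyBranchRight (Ioo 0 1) (Ioo (1 / 2) 1) := by
  rintro y ⟨hy0, hy1⟩
  constructor
  · rw [fareyBranchRight, lt_inv_comm₀ (by norm_num) (by linarith)]; linarith
  · rw [fareyBranchRight, inv_lt_one₀ (by linarith)]; linarith

lemma mapsTo_fareyProj_Ioo_zero_half : MapsTo fareyProj (Ioo 0 (1 / 2)) (Ioo 0 1) := by
  rintro x ⟨hx0, hx2⟩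
  rw [mem_Ioo, fareyProj_of_le hx2.le, lt_div_iff₀ (by linarith), div_lt_one (by linarith)]
  constructor <;> linarith

lemma mapsTo_fareyProj_Ioo_half_one : MapsTo fareyProj (Ioo (1 / 2) 1) (Ioo 0 1) := by
  rintro x ⟨hx2, hx1⟩
  have hx0 : 0 < x := by linarith
  rw [mem_Ioo, fareyProj_of_lt hx2, sub_pos, div_lt_iff₀ hx0, sub_lt_comm, lt_div_iff₀ hx0]
  constructor <;> linarith

lemma invOn_fareyBranchLeft : InvOn fareyProj fareyBranchLeft (Ioo 0 1) (Ioo 0 (1 / 2)) := by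
  constructor
  · intro y hy
    have hy0 : 0 < y := hy.1
    rw [fareyProj_of_le (mapsTo_fareyBranchLeft hy).2.le, fareyBranchLeft]
    field_simp
    ring
  · rintro x ⟨hx0, hx2⟩
    have h1x : 1 - x ≠ 0 := by linarith
    rw [fareyProj_of_le hx2.le, fareyBranchLeft]
    field_simp
    ring

lemma invOn_fareyBranchRight : InvOn fareyProj fareyBranchRight (Ioo 0 1) (Ioo (1 / 2) 1) := by
  constructor
  · intro y hy
    rw [fareyProj_of_lt (mapsTo_fareyBranchRight hy).1, fareyBranchRight, one_div, inv_inv]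
    ring
  · rintro x ⟨hx2, hx1⟩
    rw [fareyProj_of_lt hx2, fareyBranchRight, sub_sub_cancel, one_div, inv_inv]

lemma image_fareyBranchLeft (s : Set ℝ) :
    fareyBranchLeft '' (s ∩ Ioo 0 1) = fareyProj ⁻¹' s ∩ Ioo 0 (1 / 2) :=
  invOn_fareyBranchLeft.image_inter_eq_preimage_inter mapsTo_fareyBranchLeft
    mapsTo_fareyProj_Ioo_zero_half s

lemma image_fareyBranchRight (s : Set ℝ) :
    fareyBranchRight '' (s ∩ Ioo 0 1) = fareyProj ⁻¹' s ∩ Ioo (1 / 2) 1 :=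
  invOn_fareyBranchRight.image_inter_eq_preimage_inter mapsTo_fareyBranchRight
    mapsTo_fareyProj_Ioo_half_one s

lemma preimage_fareyProj_inter_Ioo_ae_eq (s : Set ℝ) :
    (fareyProj ⁻¹' s ∩ Ioo 0 1 : Set ℝ) =ᵐ[volume]
      (fareyBranchLeft '' (s ∩ Ioo 0 1) ∪ fareyBranchRight '' (s ∩ Ioo 0 1) : Set ℝ) := by
  rw [image_fareyBranchLeft, image_fareyBranchRight, ← inter_union_distrib_left,
    ← Ioc_union_Ioo_eq_Ioo (by norm_num : (0 : ℝ) ≤ 1 / 2) (by norm_num)]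
  exact Filter.EventuallyEq.rfl.inter (Ioo_ae_eq_Ioc.symm.union Filter.EventuallyEq.rfl)

lemma hasDerivAt_fareyBranchLeft {y : ℝ} (hy : 1 + y ≠ 0) :
    HasDerivAt fareyBranchLeft (1 / (1 + y) ^ 2) y :=
  ((hasDerivAt_id' y).div ((hasDerivAt_id' y).const_add 1) hy).congr_deriv (by ring)

lemma hasDerivAt_fareyBranchRight {y : ℝ} (hy : 2 - y ≠ 0) :
    HasDerivAt fareyBranchRight (1 / (2 - y) ^ 2) y :=
  (((hasDerivAt_id' y).const_sub 2).inv hy).congr_deriv (by ring)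

lemma fareyMeasure_apply {A : Set ℝ} (hA : MeasurableSet A) :
    fareyMeasure A = ∫⁻ x in A ∩ Ioo 0 1, ENNReal.ofReal (1 / (x * (1 - x))) := by
  rw [fareyMeasure, withDensity_apply _ hA, Measure.restrict_restrict hA]

lemma lintegral_image_fareyBranchLeft {t : Set ℝ} (ht : MeasurableSet t) (hts : t ⊆ Ioo 0 1) :
    ∫⁻ x in fareyBranchLeft '' t, ENNReal.ofReal (1 / (x * (1 - x))) =
      ∫⁻ y in t, ENNReal.ofReal (1 / y) := by
  have hderiv (y : ℝ) (hy : y ∈ t) :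
      HasDerivWithinAt fareyBranchLeft (1 / (1 + y) ^ 2) t y :=
    (hasDerivAt_fareyBranchLeft (by linarith [(hts hy).1])).hasDerivWithinAt
  rw [lintegral_image_eq_lintegral_abs_deriv_mul ht hderiv
    (invOn_fareyBranchLeft.1.injOn.mono hts)]
  refine setLIntegral_congr_fun ht fun y hy => ?_
  have hy0 : 0 < y := (hts hy).1
  rw [← ENNReal.ofReal_mul (abs_nonneg _), abs_of_nonneg (by positivity), fareyBranchLeft]
  congr 1
  field_simp
  ring

lemma lintegral_image_fareyBranchRight {t : Set ℝ} (ht : MeasurableSet t) (hts : t ⊆ Ioo 0 1) :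
    ∫⁻ x in fareyBranchRight '' t, ENNReal.ofReal (1 / (x * (1 - x))) =
      ∫⁻ y in t, ENNReal.ofReal (1 / (1 - y)) := by
  have hderiv (y : ℝ) (hy : y ∈ t) :
      HasDerivWithinAt fareyBranchRight (1 / (2 - y) ^ 2) t y :=
    (hasDerivAt_fareyBranchRight (by linarith [(hts hy).2])).hasDerivWithinAt
  rw [lintegral_image_eq_lintegral_abs_deriv_mul ht hderiv
    (invOn_fareyBranchRight.1.injOn.mono hts)]
  refine setLIntegral_congr_fun ht fun y hy => ?_
  have h1y : 1 - y ≠ 0 := by linarith [(hts hy).2]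
  have h2y : 2 - y ≠ 0 := by linarith [(hts hy).2]
  have h1sub : 1 - (2 - y)⁻¹ = (1 - y) / (2 - y) := by field_simp; ring
  rw [← ENNReal.ofReal_mul (abs_nonneg _), abs_of_nonneg (by positivity), fareyBranchRight, h1sub]
  congr 1
  field_simp

/-- The measure with density `1/(x(1-x))` on `(0,1)` is invariant under the projective
unsorted Farey map. -/
theorem stmt_1 : fareyMeasure.map fareyProj = fareyMeasure := by
  ext s hs
  set t := s ∩ Ioo (0 : ℝ) 1
  have ht : MeasurableSet t := hs.inter measurableSet_Ioo
  have hright : MeasurableSet (fareyBranchRight '' t) := by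
    rw [image_fareyBranchRight]
    exact (measurable_fareyProj hs).inter measurableSet_Ioo
  have hdisj : Disjoint (fareyBranchLeft '' t) (fareyBranchRight '' t) := by
    rw [image_fareyBranchLeft, image_fareyBranchRight]
    exact .mono inter_subset_right inter_subset_right (Ioo_disjoint_Ioo.2 (by norm_num))
  rw [Measure.map_apply measurable_fareyProj hs, fareyMeasure_apply (measurable_fareyProj hs),
    fareyMeasure_apply hs, setLIntegral_congr (preimage_fareyProj_inter_Ioo_ae_eq s),
    lintegral_union hright hdisj, lintegral_image_fareyBranchLeft ht inter_subset_right,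
    lintegral_image_fareyBranchRight ht inter_subset_right,
    ← lintegral_add_left (by fun_prop : Measurable fun y : ℝ => ENNReal.ofReal (1 / y))]
  refine setLIntegral_congr_fun ht fun y ⟨_, hy0, hy1⟩ => ?_
  have h1y : 1 - y ≠ 0 := by linarith
  rw [← ENNReal.ofReal_add (by positivity) (by linarith [one_div_pos.2 (sub_pos.2 hy1)])]
  congr 1
  field_simp
  ring
end

section
/- The iterated integral ∫₀¹ ∫₀^{1−x} 1/((x+y)(1−x)(1−y)) dy dx equals π²/4. -/
/-!
The inner integral is elementary: by partial fractions in `y` it equals `-2 log x / (1 - x²)`.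
Expanding `1 / (1 - x²)` as a geometric series and integrating termwise with
`∫₀¹ -log x · xᵏ dx = 1 / (k + 1)²` turns the outer integral into
`2 ∑ 1 / (2n + 1)² = π² / 4`.
-/

open Real MeasureTheory Set intervalIntegral

theorem hasSum_one_div_two_mul_add_one_sq :
    HasSum (fun n : ℕ => 1 / (2 * (n : ℝ) + 1) ^ 2) (π ^ 2 / 8) := by
  have hodd : Summable (fun n : ℕ => 1 / ((2 * n + 1 : ℕ) : ℝ) ^ 2) :=
    hasSum_zeta_two.summable.comp_injective fun a b hab => by omega
  have heven : HasSum (fun n : ℕ => 1 / ((2 * n : ℕ) : ℝ) ^ 2) (π ^ 2 / 24) := by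
    have h := hasSum_zeta_two.mul_left (1 / 4)
    rw [show 1 / 4 * (π ^ 2 / 6) = π ^ 2 / 24 by ring] at h
    refine h.congr_fun fun n => ?_
    push_cast
    ring
  have htot := (HasSum.even_add_odd (f := fun n : ℕ => 1 / (n : ℝ) ^ 2) heven
    hodd.hasSum).unique hasSum_zeta_two
  rw [show π ^ 2 / 8 = ∑' n : ℕ, 1 / ((2 * n + 1 : ℕ) : ℝ) ^ 2 by linarith]
  exact hodd.hasSum.congr_fun fun n => by push_cast; ring

theorem integral_eq_of_hasSum_of_nonneg {α : Type*} [MeasurableSpace α] {μ : Measure α}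
    {F : ℕ → α → ℝ} {f : α → ℝ} {s : ℝ}
    (hF_int : ∀ n, Integrable (F n) μ) (hF_nonneg : ∀ n, 0 ≤ᵐ[μ] F n)
    (hF_sum : HasSum (fun n => ∫ a, F n a ∂μ) s)
    (hf : ∀ᵐ a ∂μ, HasSum (fun n => F n a) (f a)) :
    ∫ a, f a ∂μ = s := by
  have hnorm : ∀ n, ∫ a, ‖F n a‖ ∂μ = ∫ a, F n a ∂μ := fun n =>
    integral_congr_ae <| (hF_nonneg n).mono fun a ha => norm_of_nonneg ha
  rw [hF_sum.unique <|
    hasSum_integral_of_summable_integral_norm hF_int (by simpa only [hnorm] using hF_sum.summable)]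
  exact integral_congr_ae (hf.mono fun a ha => ha.tsum_eq.symm)

/-- `x * log x` is grouped so that continuity at `0` is `Real.continuous_mul_log`. -/
noncomputable def negLogMulPowPrimitive (k : ℕ) (x : ℝ) : ℝ :=
  x ^ (k + 1) / ((k : ℝ) + 1) ^ 2 - x ^ k * (x * log x) / ((k : ℝ) + 1)

theorem hasDerivAt_negLogMulPowPrimitive (k : ℕ) {x : ℝ} (hx : x ≠ 0) :
    HasDerivAt (negLogMulPowPrimitive k) (-log x * x ^ k) x := by
  have hpow : HasDerivAt (fun x : ℝ => x ^ (k + 1)) (((k : ℝ) + 1) * x ^ k) x := by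
    simpa using hasDerivAt_pow (k + 1) x
  have h := (hpow.div_const (((k : ℝ) + 1) ^ 2)).sub
    ((hpow.mul (hasDerivAt_log hx)).div_const ((k : ℝ) + 1))
  refine h.congr_of_eventuallyEq (.of_forall fun y => ?_) |>.congr_deriv ?_
  · simp only [negLogMulPowPrimitive, Pi.sub_apply, Pi.mul_apply, pow_succ]
    ring
  · field_simp
    ring

theorem continuous_negLogMulPowPrimitive (k : ℕ) : Continuous (negLogMulPowPrimitive k) :=
  ((continuous_pow (k + 1)).div_const _).sub
    (((continuous_pow k).mul continuous_mul_log).div_const _)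

theorem neg_log_mul_pow_nonneg (k : ℕ) {x : ℝ} (hx : x ∈ Icc (0 : ℝ) 1) :
    0 ≤ -log x * x ^ k :=
  mul_nonneg (neg_nonneg.2 (log_nonpos hx.1 hx.2)) (pow_nonneg hx.1 k)

theorem integrableOn_neg_log_mul_pow (k : ℕ) :
    IntegrableOn (fun x : ℝ => -log x * x ^ k) (Ioo 0 1) :=
  (integrableOn_deriv_of_nonneg (continuous_negLogMulPowPrimitive k).continuousOn
    (fun _ hx => hasDerivAt_negLogMulPowPrimitive k hx.1.ne')
    (fun _ hx => neg_log_mul_pow_nonneg k (Ioo_subset_Icc_self hx))).mono_set Ioo_subset_Ioc_self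

theorem integral_neg_log_mul_pow (k : ℕ) :
    ∫ x in Ioo 0 1, -log x * x ^ k = 1 / ((k : ℝ) + 1) ^ 2 := by
  rw [← integral_Ioc_eq_integral_Ioo, ← integral_of_le zero_le_one,
    integral_eq_sub_of_hasDerivAt_of_le zero_le_one
      (continuous_negLogMulPowPrimitive k).continuousOn
      (fun _ hx => hasDerivAt_negLogMulPowPrimitive k hx.1.ne')
      ((intervalIntegrable_iff_integrableOn_Ioo_of_le zero_le_one).2
        (integrableOn_neg_log_mul_pow k))]
  simp [negLogMulPowPrimitive]

theorem integral_one_div_add_mul_sub_mul_sub {x : ℝ} (hx₀ : 0 < x) (hx₁ : x ≠ 1) :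
    ∫ y in (0 : ℝ)..(1 - x), 1 / ((x + y) * (1 - x) * (1 - y)) = -2 * log x / (1 - x ^ 2) := by
  have hpos : ∀ y ∈ uIcc 0 (1 - x), 0 < x + y ∧ 0 < 1 - y := by
    intro y hy
    rcases le_total 0 (1 - x) with h | h
    · rw [uIcc_of_le h] at hy; constructor <;> linarith [hy.1, hy.2]
    · rw [uIcc_of_ge h] at hy; constructor <;> linarith [hy.1, hy.2]
  have hx₁' : 1 - x ≠ 0 := sub_ne_zero.2 hx₁.symm
  have hderiv : ∀ y ∈ uIcc 0 (1 - x),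
      HasDerivAt (fun y => (log (x + y) - log (1 - y)) / (1 - x ^ 2))
        (1 / ((x + y) * (1 - x) * (1 - y))) y := by
    intro y hy
    obtain ⟨h₁, h₂⟩ := hpos y hy
    refine ((((hasDerivAt_id y).const_add x).log h₁.ne').sub
      (((hasDerivAt_id y).const_sub 1).log h₂.ne')).div_const (1 - x ^ 2) |>.congr_deriv ?_
    have : 1 + x ≠ 0 := by linarith
    rw [show 1 - x ^ 2 = (1 - x) * (1 + x) by ring, id]
    field_simp [h₁.ne', h₂.ne']
    ring
  have hcont : ContinuousOn (fun y => 1 / ((x + y) * (1 - x) * (1 - y))) (uIcc 0 (1 - x)) :=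
    continuousOn_const.div (by fun_prop) fun y hy =>
      mul_ne_zero (mul_ne_zero (hpos y hy).1.ne' hx₁') (hpos y hy).2.ne'
  rw [integral_eq_sub_of_hasDerivAt hderiv hcont.intervalIntegrable]
  simp only [add_sub_cancel, log_one, sub_sub_cancel, zero_sub, add_zero, sub_zero, neg_mul]
  ring

theorem hasSum_neg_two_mul_log_mul_pow_two_mul {x : ℝ} (hx : x ∈ Ioo (0 : ℝ) 1) :
    HasSum (fun n : ℕ => 2 * (-log x * x ^ (2 * n))) (-2 * log x / (1 - x ^ 2)) := by
  have hgeom := (hasSum_geometric_of_lt_one (sq_nonneg x) (by nlinarith [hx.1, hx.2])).mul_left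
    (-2 * log x)
  rw [← div_eq_mul_inv] at hgeom
  exact hgeom.congr_fun fun n => by rw [pow_mul]; ring

/-- The total mass of the invariant density of the Reverse algorithm:
`∫₀¹ ∫₀^{1-x} 1/((x+y)(1-x)(1-y)) dy dx = π²/4`. -/
theorem stmt_8 :
    (∫ x in (0:ℝ)..1, ∫ y in (0:ℝ)..(1 - x), 1 / ((x + y) * (1 - x) * (1 - y))) =
      Real.pi ^ 2 / 4 := by
  rw [integral_of_le zero_le_one, integral_Ioc_eq_integral_Ioo,
    setIntegral_congr_fun measurableSet_Ioo fun x hx =>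
      integral_one_div_add_mul_sub_mul_sub hx.1 hx.2.ne]
  refine integral_eq_of_hasSum_of_nonneg (F := fun n x => 2 * (-log x * x ^ (2 * n)))
    (fun n => (integrableOn_neg_log_mul_pow (2 * n)).const_mul 2)
    (fun n => (ae_restrict_mem measurableSet_Ioo).mono fun x hx =>
      mul_nonneg zero_le_two (neg_log_mul_pow_nonneg _ (Ioo_subset_Icc_self hx)))
    ?_ ((ae_restrict_mem measurableSet_Ioo).mono fun x hx =>
      hasSum_neg_two_mul_log_mul_pow_two_mul hx)
  have hterm (n : ℕ) :
      ∫ x in Ioo 0 1, 2 * (-log x * x ^ (2 * n)) = 2 * (1 / (2 * (n : ℝ) + 1) ^ 2) := by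
    rw [MeasureTheory.integral_const_mul, integral_neg_log_mul_pow]
    push_cast
    ring
  rw [show π ^ 2 / 4 = 2 * (π ^ 2 / 8) by ring]
  exact (hasSum_one_div_two_mul_add_one_sq.mul_left 2).congr_fun hterm
end

section
/- The iterated integral ∫₀¹ ∫₀^{1−x} 1/(2(1−x)(x+y)) dy dx equals π²/12; equivalently, ∫₀¹ (log x)/(2(x−1)) dx = π²/12. -/
/-!
The inner integral is `∫₀^{1-x} dy/(x+y) = -log x`, leaving `½ ∫₀¹ log x/(x-1) dx`. Expanding
`1/(1-x) = ∑ xⁿ` and integrating termwise with `∫₀¹ xⁿ log x dx = -1/(n+1)²` (all terms have the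
same sign, so the exchange is legitimate) turns this integral into `ζ(2) = π²/6`.
-/

open Real Set MeasureTheory intervalIntegral

lemma intervalIntegrable_pow_mul_log (n : ℕ) (a b : ℝ) :
    IntervalIntegrable (fun x : ℝ => x ^ n * log x) volume a b :=
  intervalIntegrable_log'.continuousOn_mul (continuous_pow n).continuousOn

lemma hasDerivAt_primitive_pow_mul_log (n : ℕ) {x : ℝ} (hx : x ≠ 0) :
    HasDerivAt (fun x : ℝ => x ^ n * (x * log x) / (n + 1) - x ^ (n + 1) / ((n : ℝ) + 1) ^ 2)
      (x ^ n * log x) x := by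
  have h₁ := ((hasDerivAt_pow n x).mul (hasDerivAt_mul_log hx)).div_const ((n : ℝ) + 1)
  have h₂ := (hasDerivAt_pow (n + 1) x).div_const (((n : ℝ) + 1) ^ 2)
  refine (h₁.sub h₂).congr_deriv ?_
  rcases n with _ | m
  · simp
  · push_cast
    simp only [pow_succ]
    field_simp
    ring

lemma integral_pow_mul_log_zero_one (n : ℕ) :
    ∫ x in (0 : ℝ)..1, x ^ n * log x = -1 / ((n : ℝ) + 1) ^ 2 := by
  rw [integral_eq_sub_of_hasDeriv_right_of_le zero_le_one
    (by fun_prop (disch := norm_num) : Continuous _).continuousOn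
    (fun x hx => (hasDerivAt_primitive_pow_mul_log n hx.1.ne').hasDerivWithinAt)
    (intervalIntegrable_pow_mul_log n 0 1)]
  simp only [one_pow, log_one, zero_mul, mul_zero, zero_div, ne_eq, Nat.add_one_ne_zero,
    not_false_eq_true, zero_pow, sub_self, sub_zero]
  ring

lemma tsum_pow_mul_neg_log {x : ℝ} (hx : x ∈ Ioc 0 1) :
    ∑' n : ℕ, x ^ n * -log x = log x / (x - 1) := by
  rw [tsum_mul_right]
  rcases hx.2.eq_or_lt with rfl | hx1
  · simp
  · rw [tsum_geometric_of_lt_one hx.1.le hx1, ← neg_sub, inv_neg, neg_mul_neg, inv_mul_eq_div]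

lemma integral_log_div_sub_one : ∫ x in (0 : ℝ)..1, log x / (x - 1) = π ^ 2 / 6 := by
  have hint (n : ℕ) : IntegrableOn (fun x : ℝ => x ^ n * -log x) (Ioc 0 1) :=
    (intervalIntegrable_iff_integrableOn_Ioc_of_le zero_le_one).1
      (intervalIntegrable_log'.neg.continuousOn_mul (continuous_pow n).continuousOn)
  have hval (n : ℕ) : ∫ x in Ioc 0 1, x ^ n * -log x = 1 / ((n : ℝ) + 1) ^ 2 := by
    rw [← integral_of_le zero_le_one]
    simp only [mul_neg, intervalIntegral.integral_neg, integral_pow_mul_log_zero_one]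
    ring
  have hnorm (n : ℕ) : ∫ x in Ioc 0 1, ‖x ^ n * -log x‖ = ∫ x in Ioc 0 1, x ^ n * -log x :=
    setIntegral_congr_fun measurableSet_Ioc fun x hx =>
      norm_of_nonneg (mul_nonneg (pow_nonneg hx.1.le n) (neg_nonneg.2 (log_nonpos hx.1.le hx.2)))
  have hzeta : HasSum (fun n : ℕ => 1 / ((n : ℝ) + 1) ^ 2) (π ^ 2 / 6) := by
    simpa using (hasSum_nat_add_iff' 1).2 hasSum_zeta_two
  have hsum := hasSum_integral_of_summable_integral_norm hint
    (by simpa only [hnorm, hval] using hzeta.summable)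
  simp only [hval] at hsum
  rw [integral_of_le zero_le_one, ← setIntegral_congr_fun measurableSet_Ioc fun x hx =>
    tsum_pow_mul_neg_log hx]
  exact hsum.unique hzeta

-- Also true at `x = 1`, where both sides are `0` by the convention `a / 0 = 0`.
lemma integral_one_div_two_mul_one_sub_mul_add {x : ℝ} (hx : 0 < x) :
    ∫ y in (0 : ℝ)..(1 - x), 1 / (2 * (1 - x) * (x + y)) = log x / (2 * (x - 1)) := by
  simp only [one_div, mul_inv, intervalIntegral.integral_const_mul]
  rw [integral_comp_add_left (fun y => y⁻¹), add_zero, add_sub_cancel,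
    integral_inv_of_pos hx one_pos, one_div, log_inv, ← neg_sub x 1, inv_neg, div_eq_mul_inv, mul_inv]
  ring

/-- The total mass of the invariant density of the Cassaigne algorithm:
`∫₀¹ ∫₀^{1-x} 1/(2(1-x)(x+y)) dy dx = π²/12`; equivalently
`∫₀¹ (log x)/(2(x-1)) dx = π²/12`. -/
theorem stmt_12 :
    (∫ x in (0:ℝ)..1, ∫ y in (0:ℝ)..(1 - x), 1 / (2 * (1 - x) * (x + y))) =
      Real.pi ^ 2 / 12 ∧
    (∫ x in (0:ℝ)..1, Real.log x / (2 * (x - 1))) = Real.pi ^ 2 / 12 := by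
  have h : ∫ x in (0:ℝ)..1, Real.log x / (2 * (x - 1)) = Real.pi ^ 2 / 12 := by
    simp only [mul_comm (2 : ℝ), ← div_div, intervalIntegral.integral_div, integral_log_div_sub_one]
    ring
  refine ⟨?_, h⟩
  rw [← h]
  refine integral_congr_ae (Filter.Eventually.of_forall fun x hx => ?_)
  rw [uIoc_of_le zero_le_one] at hx
  exact integral_one_div_two_mul_one_sub_mul_add hx.1
end

section
/- Let S₃ be the group of permutations of {1,2,3}. For π ∈ S₃ define the subsets of ℝ³: Λ_π = {x ∈ (0,∞)³ : x_{π(1)} < x_{π(2)} < x_{π(3)}}, Θ_π = {x ∈ (0,∞)³ : x_{π(1)} < x_{π(2)}}, Λ*_π = {a ∈ (0,∞)³ : a_{π(1)} < a_{π(3)} < a_{π(2)}}, Θ*_π = {a ∈ (0,∞)³ : a_{π(1)} < a_{π(3)}}. Then ⋃_{π∈S₃} (Λ_π × Θ*_π) = ⋃_{π∈S₃} (Θ_π × Λ*_π) up to a set of Lebesgue measure 0 in ℝ⁶, and both unions are disjoint. -/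
open MeasureTheory Set

/-- `Λ_π = {x ∈ (0,∞)³ : x_{π(1)} < x_{π(2)} < x_{π(3)}}`. -/
def brunL (π : Equiv.Perm (Fin 3)) : Set (Fin 3 → ℝ) :=
  {x | (∀ i, 0 < x i) ∧ x (π 0) < x (π 1) ∧ x (π 1) < x (π 2)}

/-- `Θ_π = {x ∈ (0,∞)³ : x_{π(1)} < x_{π(2)}}`. -/
def brunTh (π : Equiv.Perm (Fin 3)) : Set (Fin 3 → ℝ) :=
  {x | (∀ i, 0 < x i) ∧ x (π 0) < x (π 1)}

/-- `Λ*_π = {a ∈ (0,∞)³ : a_{π(1)} < a_{π(3)} < a_{π(2)}}`. -/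
def brunLS (π : Equiv.Perm (Fin 3)) : Set (Fin 3 → ℝ) :=
  {a | (∀ i, 0 < a i) ∧ a (π 0) < a (π 2) ∧ a (π 2) < a (π 1)}

/-- `Θ*_π = {a ∈ (0,∞)³ : a_{π(1)} < a_{π(3)}}`. -/
def brunThS (π : Equiv.Perm (Fin 3)) : Set (Fin 3 → ℝ) :=
  {a | (∀ i, 0 < a i) ∧ a (π 0) < a (π 2)}

/-!
Write `τ` for the transposition `(1 2)`. Then `Λ*_π = Λ_{πτ}` and `Θ_π = Θ*_{πτ}`, so the second
union is the image of the first, `U = ⋃ Λ_π × Θ*_π`, under `(x, a) ↦ (a, x)`. Disjointness holds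
because a vector with distinct coordinates is sorted by only one permutation. For `(x, a)` off the
null set where some coordinates coincide, `(x, a) ∈ U` says that `a` is larger at the argmax of `x`
than at its argmin. With three indices this relation is symmetric in `x` and `a`: if it failed for
`(a, x)`, both extremal indices of `a` would have to avoid both extremal indices of `x`.
-/

section Sorting

variable {α : Type*} [LinearOrder α]

theorem Equiv.Perm.eq_of_strictMono_comp {n : ℕ} {f : Fin n → α} {σ τ : Equiv.Perm (Fin n)}
    (hσ : StrictMono (f ∘ σ)) (hτ : StrictMono (f ∘ τ)) : σ = τ := by
  have hf : Function.Injective f := by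
    simpa using hσ.injective.comp σ.symm.injective
  have h := Tuple.unique_monotone hσ.monotone hτ.monotone
  exact Equiv.ext fun i => hf (congrFun h i)

theorem Function.Injective.exists_strictMono_comp_perm {n : ℕ} {f : Fin n → α}
    (hf : Function.Injective f) : ∃ σ : Equiv.Perm (Fin n), StrictMono (f ∘ σ) :=
  ⟨Tuple.sort f, (Tuple.monotone_sort f).strictMono_of_injective (hf.comp (Tuple.sort f).injective)⟩

theorem StrictMono.apply_perm_zero_le {n : ℕ} {f : Fin (n + 1) → α} {σ : Equiv.Perm (Fin (n + 1))}
    (hf : StrictMono (f ∘ σ)) (i : Fin (n + 1)) : f (σ 0) ≤ f i := by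
  simpa using hf.monotone (Fin.zero_le (σ.symm i))

theorem StrictMono.le_apply_perm_last {n : ℕ} {f : Fin (n + 1) → α} {σ : Equiv.Perm (Fin (n + 1))}
    (hf : StrictMono (f ∘ σ)) (i : Fin (n + 1)) : f i ≤ f (σ (Fin.last n)) := by
  simpa using hf.monotone (Fin.le_last (σ.symm i))

end Sorting

theorem Fin.three_eq_of_ne {p r u v : Fin 3} (hpr : p ≠ r) (hup : u ≠ p) (hur : u ≠ r)
    (hvp : v ≠ p) (hvr : v ≠ r) : u = v := by
  revert p r u v; decide

theorem Fin.three_lt_of_extremes {α β : Type*} [LinearOrder α] [LinearOrder β]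
    {x : Fin 3 → α} {a : Fin 3 → β} (hx : Function.Injective x) {p r u v : Fin 3}
    (hp : ∀ i, x p ≤ x i) (hr : ∀ i, x i ≤ x r) (hu : ∀ i, a u ≤ a i) (hv : ∀ i, a i ≤ a v)
    (h : a p < a r) : x u < x v := by
  have hauv : a u < a v := (hu p).trans_lt (h.trans_le (hv r))
  by_contra hle
  have hxvu : x v < x u := (not_lt.mp hle).lt_of_ne (hx.ne (ne_of_apply_ne a hauv.ne'))
  refine hauv.ne (congrArg a (Fin.three_eq_of_ne (ne_of_apply_ne a h.ne) ?_ ?_ ?_ ?_))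
  · rintro rfl; exact (hp v).not_gt hxvu
  · rintro rfl; exact (hu p).not_gt h
  · rintro rfl; exact (hv r).not_gt h
  · rintro rfl; exact (hr u).not_gt hxvu

theorem mem_brunL_iff {π : Equiv.Perm (Fin 3)} {x : Fin 3 → ℝ} :
    x ∈ brunL π ↔ (∀ i, 0 < x i) ∧ StrictMono (x ∘ π) := by
  simp [brunL, Fin.strictMono_iff_lt_succ, Fin.forall_fin_two]

theorem brunLS_eq_brunL (π : Equiv.Perm (Fin 3)) : brunLS π = brunL (π * Equiv.swap 1 2) := by
  ext a
  simp [brunLS, brunL, Equiv.swap_apply_of_ne_of_ne]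

theorem brunTh_eq_brunThS (π : Equiv.Perm (Fin 3)) : brunTh π = brunThS (π * Equiv.swap 1 2) := by
  ext a
  simp [brunTh, brunThS, Equiv.swap_apply_of_ne_of_ne]

theorem brunL_disjoint {π σ : Equiv.Perm (Fin 3)} (h : π ≠ σ) : Disjoint (brunL π) (brunL σ) :=
  Set.disjoint_left.mpr fun _ hπ hσ =>
    h (Equiv.Perm.eq_of_strictMono_comp (mem_brunL_iff.mp hπ).2 (mem_brunL_iff.mp hσ).2)

theorem brunLS_disjoint {π σ : Equiv.Perm (Fin 3)} (h : π ≠ σ) : Disjoint (brunLS π) (brunLS σ) := by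
  rw [brunLS_eq_brunL, brunLS_eq_brunL]
  exact brunL_disjoint (mt mul_right_cancel h)

theorem iUnion_brunTh_prod_brunLS :
    ⋃ π : Equiv.Perm (Fin 3), brunTh π ×ˢ brunLS π =
      Prod.swap ⁻¹' ⋃ π : Equiv.Perm (Fin 3), brunL π ×ˢ brunThS π := by
  simp_rw [preimage_iUnion, preimage_swap_prod, brunTh_eq_brunThS, brunLS_eq_brunL]
  exact (mul_right_surjective (Equiv.swap 1 2)).iUnion_comp fun ρ => brunThS ρ ×ˢ brunL ρ

theorem swap_mem_iUnion_brunL_prod_brunThS {x a : Fin 3 → ℝ} (hx : Function.Injective x)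
    (ha : Function.Injective a) (h : (x, a) ∈ ⋃ π : Equiv.Perm (Fin 3), brunL π ×ˢ brunThS π) :
    (a, x) ∈ ⋃ π : Equiv.Perm (Fin 3), brunL π ×ˢ brunThS π := by
  simp only [mem_iUnion, mem_prod, mem_brunL_iff] at h ⊢
  obtain ⟨π, ⟨hx_pos, hxπ⟩, ha_pos, haπ⟩ := h
  obtain ⟨ρ, haρ⟩ := ha.exists_strictMono_comp_perm
  exact ⟨ρ, ⟨ha_pos, haρ⟩, hx_pos, Fin.three_lt_of_extremes hx hxπ.apply_perm_zero_le
    hxπ.le_apply_perm_last haρ.apply_perm_zero_le haρ.le_apply_perm_last haπ⟩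

theorem volume_setOf_not_injective {ι : Type*} [Fintype ι] :
    volume {x : ι → ℝ | ¬ Function.Injective x} = 0 := by
  classical
  have hcover : {x : ι → ℝ | ¬ Function.Injective x} =
      ⋃ (i : ι) (j : ι) (_ : i ≠ j),
        (LinearMap.ker (LinearMap.proj (R := ℝ) (φ := fun _ : ι => ℝ) i - LinearMap.proj j) :
          Set (ι → ℝ)) := by
    ext x
    simp [Function.Injective, sub_eq_zero, and_comm]
  rw [hcover]
  refine measure_iUnion_null fun i => measure_iUnion_null fun j => measure_iUnion_null fun hij =>
    Measure.addHaar_submodule _ _ fun htop => ?_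
  have hmem := Submodule.eq_top_iff'.mp htop (Pi.single j 1)
  simp [Pi.single_eq_of_ne hij] at hmem

/-- The unions `⋃_π Λ_π × Θ*_π` and `⋃_π Θ_π × Λ*_π` agree up to a set of Lebesgue
measure zero in `ℝ⁶ = ℝ³ × ℝ³`, and both unions are disjoint. -/
theorem stmt_13 :
    (∀ π σ : Equiv.Perm (Fin 3), π ≠ σ →
      Disjoint (brunL π ×ˢ brunThS π) (brunL σ ×ˢ brunThS σ)) ∧
    (∀ π σ : Equiv.Perm (Fin 3), π ≠ σ →
      Disjoint (brunTh π ×ˢ brunLS π) (brunTh σ ×ˢ brunLS σ)) ∧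
    volume
      (((⋃ π : Equiv.Perm (Fin 3), brunL π ×ˢ brunThS π) \
        (⋃ π : Equiv.Perm (Fin 3), brunTh π ×ˢ brunLS π)) ∪
       ((⋃ π : Equiv.Perm (Fin 3), brunTh π ×ˢ brunLS π) \
        (⋃ π : Equiv.Perm (Fin 3), brunL π ×ˢ brunThS π))) = 0 := by
  refine ⟨fun π σ h => disjoint_prod.mpr (.inl (brunL_disjoint h)),
    fun π σ h => disjoint_prod.mpr (.inr (brunLS_disjoint h)), ?_⟩
  rw [iUnion_brunTh_prod_brunLS]
  set N := {x : Fin 3 → ℝ | ¬ Function.Injective x}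
  have hN : volume (N ×ˢ univ ∪ univ ×ˢ N) = 0 := by
    simp only [Measure.volume_eq_prod, measure_union_null_iff, Measure.prod_prod, N,
      volume_setOf_not_injective, zero_mul, mul_zero, and_self]
  refine measure_mono_null ?_ hN
  rintro ⟨x, a⟩ hxa
  by_contra hxa_good
  obtain ⟨hx, ha⟩ : Function.Injective x ∧ Function.Injective a := by
    simpa [N, not_or] using hxa_good
  rcases hxa with ⟨hU, hV⟩ | ⟨hV, hU⟩
  · exact hV (swap_mem_iUnion_brunL_prod_brunThS hx ha hU)
  · exact hU (swap_mem_iUnion_brunL_prod_brunThS ha hx hV)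
end

section
/- Let S₃ be the group of permutations of {1,2,3}. For π ∈ S₃ define Λ_π = {x ∈ (0,∞)³ : x_{π(1)} < x_{π(2)} < x_{π(3)}}, Θ_π = {x ∈ (0,∞)³ : x_{π(1)} < x_{π(2)}}, Λ*_π = {a ∈ (0,∞)³ : a_{π(1)} < a_{π(3)} < a_{π(2)}}, Θ*_π = {a ∈ (0,∞)³ : a_{π(1)} < a_{π(3)}}. Define F̃ on Λ_π × (0,∞)³ by F̃(x, a) = (x′, a′) where x′_{π(3)} = x_{π(3)} − x_{π(2)}, a′_{π(2)} = a_{π(2)} + a_{π(3)}, and all other coordinates are unchanged. Then for each π ∈ S₃, F̃ restricted to Λ_π × Θ*_π is one-to-one and onto Θ_π × Λ*_π; consequently F̃ is a bijection of D = ⋃_{π∈S₃} (Λ_π × Θ*_π) onto itself up to a set of Lebesgue measure 0. -/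
open MeasureTheory Set

/-- The branch of the Brun natural extension corresponding to `π`:
`x′_{π(3)} = x_{π(3)} - x_{π(2)}`, `a′_{π(2)} = a_{π(2)} + a_{π(3)}`,
all other coordinates unchanged. -/
def brunExtBranch (π : Equiv.Perm (Fin 3)) :
    (Fin 3 → ℝ) × (Fin 3 → ℝ) → (Fin 3 → ℝ) × (Fin 3 → ℝ) := fun p =>
  (Function.update p.1 (π 2) (p.1 (π 2) - p.1 (π 1)),
   Function.update p.2 (π 1) (p.2 (π 1) + p.2 (π 2)))

/-- The global Brun natural extension map: on each `Λ_π` (where the coordinates of `x`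
are ordered according to `π`), it subtracts the second largest coordinate of `x` from the
largest one and adds the dual coordinate of the largest to that of the second largest. -/
noncomputable def brunExt :
    (Fin 3 → ℝ) × (Fin 3 → ℝ) → (Fin 3 → ℝ) × (Fin 3 → ℝ) := fun p =>
  let x := p.1; let a := p.2
  if x 0 < x 1 ∧ x 1 < x 2 then
    (Function.update x 2 (x 2 - x 1), Function.update a 1 (a 1 + a 2))
  else if x 0 < x 2 ∧ x 2 < x 1 then
    (Function.update x 1 (x 1 - x 2), Function.update a 2 (a 2 + a 1))
  else if x 1 < x 0 ∧ x 0 < x 2 then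
    (Function.update x 2 (x 2 - x 0), Function.update a 0 (a 0 + a 2))
  else if x 1 < x 2 ∧ x 2 < x 0 then
    (Function.update x 0 (x 0 - x 2), Function.update a 2 (a 2 + a 0))
  else if x 2 < x 0 ∧ x 0 < x 1 then
    (Function.update x 1 (x 1 - x 0), Function.update a 0 (a 0 + a 1))
  else
    (Function.update x 0 (x 0 - x 1), Function.update a 1 (a 1 + a 0))

namespace BrunAux

lemma fin3 (i : Fin 3) : i = 0 ∨ i = 1 ∨ i = 2 := by omega

lemma pne (π : Equiv.Perm (Fin 3)) {i j : Fin 3} (h : i ≠ j) : π i ≠ π j :=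
  fun he => h (π.injective he)

noncomputable def pr (i : Fin 3) : (Fin 3 → ℝ) →ₗ[ℝ] ℝ := LinearMap.proj i

lemma pr_apply (i : Fin 3) (x : Fin 3 → ℝ) : pr i x = x i := rfl

def gInv (π : Equiv.Perm (Fin 3)) :
    (Fin 3 → ℝ) × (Fin 3 → ℝ) → (Fin 3 → ℝ) × (Fin 3 → ℝ) := fun q =>
  (Function.update q.1 (π 2) (q.1 (π 2) + q.1 (π 1)),
   Function.update q.2 (π 1) (q.2 (π 1) - q.2 (π 2)))

lemma left_inv (π : Equiv.Perm (Fin 3)) (p) : gInv π (brunExtBranch π p) = p := by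
  have h12 : π 1 ≠ π 2 := pne π (by decide)
  have h21 : π 2 ≠ π 1 := h12.symm
  unfold gInv brunExtBranch
  refine Prod.ext ?_ ?_ <;>
    simp [Function.update_idem, Function.update_self, Function.update_of_ne h12,
      Function.update_of_ne h21, Function.update_eq_self]

lemma right_inv (π : Equiv.Perm (Fin 3)) (q) : brunExtBranch π (gInv π q) = q := by
  have h12 : π 1 ≠ π 2 := pne π (by decide)
  have h21 : π 2 ≠ π 1 := h12.symm
  unfold gInv brunExtBranch
  refine Prod.ext ?_ ?_ <;>
    simp [Function.update_idem, Function.update_self, Function.update_of_ne h12,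
      Function.update_of_ne h21, Function.update_eq_self]

lemma branch_inj (π : Equiv.Perm (Fin 3)) : Function.Injective (brunExtBranch π) :=
  Function.LeftInverse.injective (left_inv π)

lemma branch_mapsTo (π : Equiv.Perm (Fin 3)) :
    MapsTo (brunExtBranch π) (brunL π ×ˢ brunThS π) (brunTh π ×ˢ brunLS π) := by
  have h01 : π 0 ≠ π 1 := pne π (by decide)
  have h02 : π 0 ≠ π 2 := pne π (by decide)
  have h12 : π 1 ≠ π 2 := pne π (by decide)
  have h21 : π 2 ≠ π 1 := h12.symm
  rintro ⟨x, a⟩ ⟨⟨hxpos, hx01, hx12⟩, hapos, ha02⟩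
  dsimp only [brunExtBranch] at *
  refine ⟨⟨?_, ?_⟩, ?_, ?_, ?_⟩ <;> dsimp only
  · intro i
    by_cases hi : i = π 2
    · subst hi; rw [Function.update_self]; linarith
    · rw [Function.update_of_ne hi]; exact hxpos i
  · rw [Function.update_of_ne h02, Function.update_of_ne h12]; exact hx01
  · intro i
    by_cases hi : i = π 1
    · subst hi; rw [Function.update_self]; have := hapos (π 2); linarith [hapos (π 1)]
    · rw [Function.update_of_ne hi]; exact hapos i
  · rw [Function.update_of_ne h01, Function.update_of_ne h21]; exact ha02
  · rw [Function.update_of_ne h21, Function.update_self]; linarith [hapos (π 1)]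

lemma gInv_mem (π : Equiv.Perm (Fin 3)) {q} (hq : q ∈ brunTh π ×ˢ brunLS π) :
    gInv π q ∈ brunL π ×ˢ brunThS π := by
  have h01 : π 0 ≠ π 1 := pne π (by decide)
  have h02 : π 0 ≠ π 2 := pne π (by decide)
  have h12 : π 1 ≠ π 2 := pne π (by decide)
  have h21 : π 2 ≠ π 1 := h12.symm
  obtain ⟨x, a⟩ := q
  obtain ⟨⟨hxpos, hx01⟩, hapos, ha02, ha21⟩ := hq
  dsimp only [gInv] at *
  refine ⟨⟨?_, ?_, ?_⟩, ?_, ?_⟩ <;> dsimp only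
  · intro i
    by_cases hi : i = π 2
    · subst hi; rw [Function.update_self]; linarith [hxpos (π 2), hxpos (π 1)]
    · rw [Function.update_of_ne hi]; exact hxpos i
  · rw [Function.update_of_ne h02, Function.update_of_ne h12]; exact hx01
  · rw [Function.update_of_ne h12, Function.update_self]; linarith [hxpos (π 2)]
  · intro i
    by_cases hi : i = π 1
    · subst hi; rw [Function.update_self]; linarith
    · rw [Function.update_of_ne hi]; exact hapos i
  · rw [Function.update_of_ne h01, Function.update_of_ne h21]; exact ha02

lemma branch_bijOn (π : Equiv.Perm (Fin 3)) :
    Set.BijOn (brunExtBranch π) (brunL π ×ˢ brunThS π) (brunTh π ×ˢ brunLS π) :=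
  ⟨branch_mapsTo π, (branch_inj π).injOn, fun q hq => ⟨gInv π q, gInv_mem π hq, right_inv π q⟩⟩

lemma ext_eq (π : Equiv.Perm (Fin 3)) (p : (Fin 3 → ℝ) × (Fin 3 → ℝ))
    (h01 : p.1 (π 0) < p.1 (π 1)) (h12 : p.1 (π 1) < p.1 (π 2)) :
    brunExt p = brunExtBranch π p := by
  obtain ⟨x, a⟩ := p
  dsimp only at h01 h12
  rcases fin3 (π 0) with e0|e0|e0 <;> rcases fin3 (π 1) with e1|e1|e1 <;>
      rcases fin3 (π 2) with e2|e2|e2 <;>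
    first
    | exact absurd (π.injective (e0.trans e1.symm)) (by decide)
    | exact absurd (π.injective (e0.trans e2.symm)) (by decide)
    | exact absurd (π.injective (e1.trans e2.symm)) (by decide)
    | (rw [e0, e1] at h01; rw [e1, e2] at h12;
       simp only [brunExt, brunExtBranch, e0, e1, e2];
       split_ifs <;>
         first
         | rfl
         | (exfalso; casesm* _ ∧ _ <;> linarith)
         | (exfalso; exact absurd (And.intro h01 h12) (by assumption)))

lemma min_max {b : Fin 3 → ℝ} {τ : Equiv.Perm (Fin 3)}
    (h01 : b (τ 0) < b (τ 1)) (h12 : b (τ 1) < b (τ 2)) :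
    (∀ j, j ≠ τ 0 → b (τ 0) < b j) ∧ (∀ j, j ≠ τ 2 → b j < b (τ 2)) := by
  constructor <;> intro j hj <;>
    obtain ⟨k, rfl⟩ : ∃ k, j = τ k := ⟨τ.symm j, (τ.apply_symm_apply j).symm⟩ <;>
    rcases fin3 k with rfl|rfl|rfl <;>
    first
    | exact absurd rfl hj
    | linarith

lemma perm_eq_of_sorted {b : Fin 3 → ℝ} {π σ : Equiv.Perm (Fin 3)}
    (hp01 : b (π 0) < b (π 1)) (hp12 : b (π 1) < b (π 2))
    (hs01 : b (σ 0) < b (σ 1)) (hs12 : b (σ 1) < b (σ 2)) : π = σ := by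
  obtain ⟨minπ, maxπ⟩ := min_max hp01 hp12
  obtain ⟨minσ, maxσ⟩ := min_max hs01 hs12
  have e0 : π 0 = σ 0 := by
    by_contra h
    have h1 := minπ (σ 0) (fun he => h he.symm)
    have h2 := minσ (π 0) h
    linarith
  have e2 : π 2 = σ 2 := by
    by_contra h
    have h1 := maxπ (σ 2) (fun he => h he.symm)
    have h2 := maxσ (π 2) h
    linarith
  have e1 : π 1 = σ 1 := by
    obtain ⟨k, hk⟩ : ∃ k, σ k = π 1 := ⟨σ.symm (π 1), σ.apply_symm_apply _⟩
    rcases fin3 k with rfl|rfl|rfl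
    · exact absurd (π.injective (e0.trans hk)) (by decide)
    · exact hk.symm
    · exact absurd (π.injective (e2.trans hk)) (by decide)
  ext i
  rcases fin3 i with rfl|rfl|rfl
  · exact congrArg Fin.val e0
  · exact congrArg Fin.val e1
  · exact congrArg Fin.val e2

lemma exists_sorted {b : Fin 3 → ℝ} (hb : Function.Injective b) :
    ∃ τ : Equiv.Perm (Fin 3), b (τ 0) < b (τ 1) ∧ b (τ 1) < b (τ 2) := by
  refine ⟨Tuple.sort b, ?_, ?_⟩ <;>
  · have hm := Tuple.monotone_sort b
    refine lt_of_le_of_ne (hm (by decide)) fun he => ?_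
    have := hb he
    exact absurd ((Tuple.sort b).injective this) (by decide)

lemma claimT {π : Equiv.Perm (Fin 3)} {q : (Fin 3 → ℝ) × (Fin 3 → ℝ)}
    (hq : q ∈ brunTh π ×ˢ brunLS π) (hinj : Function.Injective q.1) :
    q ∈ ⋃ σ : Equiv.Perm (Fin 3), brunL σ ×ˢ brunThS σ := by
  obtain ⟨⟨hxpos, hx01⟩, hapos, ha02, ha21⟩ := hq
  obtain ⟨τ, ht01, ht12⟩ := exists_sorted hinj
  obtain ⟨minτ, maxτ⟩ := min_max ht01 ht12
  refine mem_iUnion.2 ⟨τ, ⟨⟨hxpos, ht01, ht12⟩, hapos, ?_⟩⟩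
  obtain ⟨k, hk⟩ : ∃ k, π k = τ 0 := ⟨π.symm _, π.apply_symm_apply _⟩
  obtain ⟨l, hl⟩ : ∃ l, π l = τ 2 := ⟨π.symm _, π.apply_symm_apply _⟩
  have hne : τ 0 ≠ τ 2 := fun he => by have := congrArg q.1 he; linarith
  rw [← hk, ← hl]
  rcases fin3 k with rfl|rfl|rfl <;> rcases fin3 l with rfl|rfl|rfl
  · exact absurd (hk.symm.trans hl) hne
  · linarith
  · exact ha02
  · exfalso
    have h := maxτ (π 1) (by rw [← hl]; exact pne π (by decide))
    rw [← hl] at h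
    linarith
  · exact absurd (hk.symm.trans hl) hne
  · exfalso
    have h := minτ (π 0) (by rw [← hk]; exact pne π (by decide))
    rw [← hk] at h
    linarith
  · exfalso
    have h := maxτ (π 1) (by rw [← hl]; exact pne π (by decide))
    rw [← hl] at h
    linarith
  · exact ha21
  · exact absurd (hk.symm.trans hl) hne

lemma claimD {π : Equiv.Perm (Fin 3)} {p : (Fin 3 → ℝ) × (Fin 3 → ℝ)}
    (hp : p ∈ brunL π ×ˢ brunThS π) (hinj : Function.Injective p.2) :
    p ∈ ⋃ σ : Equiv.Perm (Fin 3), brunTh σ ×ˢ brunLS σ := by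
  obtain ⟨⟨hxpos, hx01, hx12⟩, hapos, ha02⟩ := hp
  obtain ⟨τ, ht01, ht12⟩ := exists_sorted hinj
  obtain ⟨minτ, maxτ⟩ := min_max ht01 ht12
  have w0 : Equiv.swap (1 : Fin 3) 2 0 = 0 := by decide
  have w1 : Equiv.swap (1 : Fin 3) 2 1 = 2 := by decide
  have w2 : Equiv.swap (1 : Fin 3) 2 2 = 1 := by decide
  refine mem_iUnion.2 ⟨τ * Equiv.swap 1 2, ⟨⟨hxpos, ?_⟩, hapos, ?_, ?_⟩⟩ <;>
    simp only [Equiv.Perm.mul_apply, w0, w1, w2]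
  · obtain ⟨k, hk⟩ : ∃ k, π k = τ 0 := ⟨π.symm _, π.apply_symm_apply _⟩
    obtain ⟨l, hl⟩ : ∃ l, π l = τ 2 := ⟨π.symm _, π.apply_symm_apply _⟩
    have hne : τ 0 ≠ τ 2 := fun he => by have := congrArg p.2 he; linarith
    rw [← hk, ← hl]
    rcases fin3 k with rfl|rfl|rfl <;> rcases fin3 l with rfl|rfl|rfl
    · exact absurd (hk.symm.trans hl) hne
    · exact hx01
    · linarith
    · exfalso
      have h := maxτ (π 2) (by rw [← hl]; exact pne π (by decide))
      rw [← hl] at h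
      linarith
    · exact absurd (hk.symm.trans hl) hne
    · exact hx12
    · exfalso
      have h := minτ (π 0) (by rw [← hk]; exact pne π (by decide))
      rw [← hk] at h
      linarith
    · exfalso
      have h := minτ (π 0) (by rw [← hk]; exact pne π (by decide))
      rw [← hk] at h
      linarith
    · exact absurd (hk.symm.trans hl) hne
  · exact ht01
  · exact ht12

lemma null_hyperplane (f : (Fin 3 → ℝ) →ₗ[ℝ] ℝ) (hf : f ≠ 0) :
    volume {x : Fin 3 → ℝ | f x = 0} = 0 := by
  have h1 : {x : Fin 3 → ℝ | f x = 0} = (LinearMap.ker f : Set (Fin 3 → ℝ)) := by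
    ext x; simp [LinearMap.mem_ker]
  rw [h1]
  exact Measure.addHaar_submodule volume _ (fun h => hf (LinearMap.ker_eq_top.1 h))

lemma null_fst (f : (Fin 3 → ℝ) →ₗ[ℝ] ℝ) (hf : f ≠ 0) :
    volume {p : (Fin 3 → ℝ) × (Fin 3 → ℝ) | f p.1 = 0} = 0 := by
  have h1 : {p : (Fin 3 → ℝ) × (Fin 3 → ℝ) | f p.1 = 0} = {x | f x = 0} ×ˢ univ := by
    ext ⟨x, a⟩; simp
  rw [h1, Measure.volume_eq_prod, Measure.prod_prod, null_hyperplane f hf, zero_mul]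

lemma null_snd (f : (Fin 3 → ℝ) →ₗ[ℝ] ℝ) (hf : f ≠ 0) :
    volume {p : (Fin 3 → ℝ) × (Fin 3 → ℝ) | f p.2 = 0} = 0 := by
  have h1 : {p : (Fin 3 → ℝ) × (Fin 3 → ℝ) | f p.2 = 0} = univ ×ˢ {x | f x = 0} := by
    ext ⟨x, a⟩; simp
  rw [h1, Measure.volume_eq_prod, Measure.prod_prod, null_hyperplane f hf, mul_zero]

lemma null_S (π : Equiv.Perm (Fin 3)) (i j : Fin 3) :
    volume {p : (Fin 3 → ℝ) × (Fin 3 → ℝ) |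
      i ≠ j ∧ Function.update p.1 (π 2) (p.1 (π 2) - p.1 (π 1)) i
            = Function.update p.1 (π 2) (p.1 (π 2) - p.1 (π 1)) j} = 0 := by
  have h12 : π 1 ≠ π 2 := pne π (by decide)
  by_cases hij : i = j
  · have : {p : (Fin 3 → ℝ) × (Fin 3 → ℝ) |
        i ≠ j ∧ Function.update p.1 (π 2) (p.1 (π 2) - p.1 (π 1)) i
              = Function.update p.1 (π 2) (p.1 (π 2) - p.1 (π 1)) j} = ∅ := by
      ext p; simp [hij]
    rw [this]; exact measure_empty
  · by_cases hi : i = π 2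
    · subst hi
      have hj2 : j ≠ π 2 := fun hh => hij hh.symm
      refine measure_mono_null ?_
        (null_fst (pr (π 2) - pr (π 1) - pr j) ?_)
      · rintro ⟨x, a⟩ ⟨-, h⟩
        rw [Function.update_self, Function.update_of_ne hj2] at h
        simp only [mem_setOf_eq, LinearMap.sub_apply, pr_apply]
        linarith
      · intro heq
        have h1 : ((pr (π 2) - pr (π 1) - pr j :
            (Fin 3 → ℝ) →ₗ[ℝ] ℝ)) (Pi.single (π 2) 1) = (1 : ℝ) := by
          simp [pr_apply, Pi.single_eq_same, Pi.single_eq_of_ne h12,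
            Pi.single_eq_of_ne hj2]
        rw [heq] at h1
        simp at h1
    · by_cases hj : j = π 2
      · subst hj
        refine measure_mono_null ?_
          (null_fst (pr (π 2) - pr (π 1) - pr i) ?_)
        · rintro ⟨x, a⟩ ⟨-, h⟩
          rw [Function.update_self, Function.update_of_ne hi] at h
          simp only [mem_setOf_eq, LinearMap.sub_apply, pr_apply]
          linarith
        · intro heq
          have h1 : ((pr (π 2) - pr (π 1) - pr i :
              (Fin 3 → ℝ) →ₗ[ℝ] ℝ)) (Pi.single (π 2) 1) = (1 : ℝ) := by
            simp [pr_apply, Pi.single_eq_same, Pi.single_eq_of_ne h12,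
              Pi.single_eq_of_ne hi]
          rw [heq] at h1
          simp at h1
      · refine measure_mono_null ?_
          (null_fst (pr i - pr j) ?_)
        · rintro ⟨x, a⟩ ⟨-, h⟩
          rw [Function.update_of_ne hi, Function.update_of_ne hj] at h
          simp only [mem_setOf_eq, LinearMap.sub_apply, pr_apply]
          linarith
        · intro heq
          have h1 : ((pr i - pr j :
              (Fin 3 → ℝ) →ₗ[ℝ] ℝ)) (Pi.single i 1) = (1 : ℝ) := by
            simp [pr_apply, Pi.single_eq_same,
              Pi.single_eq_of_ne (fun hh => hij hh.symm)]
          rw [heq] at h1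
          simp at h1

lemma null_S2 (i j : Fin 3) :
    volume {p : (Fin 3 → ℝ) × (Fin 3 → ℝ) | i ≠ j ∧ p.2 i = p.2 j} = 0 := by
  by_cases hij : i = j
  · have : {p : (Fin 3 → ℝ) × (Fin 3 → ℝ) | i ≠ j ∧ p.2 i = p.2 j} = ∅ := by
      ext p; simp [hij]
    rw [this]; exact measure_empty
  · refine measure_mono_null ?_ (null_snd (pr i - pr j) ?_)
    · rintro ⟨x, a⟩ ⟨-, h⟩
      simp only [mem_setOf_eq, LinearMap.sub_apply, pr_apply]
      linarith
    · intro heq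
      have h1 : ((pr i - pr j :
          (Fin 3 → ℝ) →ₗ[ℝ] ℝ)) (Pi.single i 1) = (1 : ℝ) := by
        simp [pr_apply, Pi.single_eq_same,
          Pi.single_eq_of_ne (fun hh => hij hh.symm)]
      rw [heq] at h1
      simp at h1

end BrunAux

open BrunAux in
/-- For each `π ∈ S₃`, the Brun natural extension restricted to `Λ_π × Θ*_π` is one-to-one
and onto `Θ_π × Λ*_π`; consequently it is a bijection of `D = ⋃_π Λ_π × Θ*_π` onto itself
up to a set of Lebesgue measure zero. -/
theorem stmt_14 :
    (∀ π : Equiv.Perm (Fin 3),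
      Set.BijOn (brunExtBranch π) (brunL π ×ˢ brunThS π) (brunTh π ×ˢ brunLS π)) ∧
    (∃ N₁ N₂ : Set ((Fin 3 → ℝ) × (Fin 3 → ℝ)), volume N₁ = 0 ∧ volume N₂ = 0 ∧
      Set.BijOn brunExt
        ((⋃ π : Equiv.Perm (Fin 3), brunL π ×ˢ brunThS π) \ N₁)
        ((⋃ π : Equiv.Perm (Fin 3), brunL π ×ˢ brunThS π) \ N₂)) := by
  classical
  refine ⟨branch_bijOn, ?_⟩
  set D : Set ((Fin 3 → ℝ) × (Fin 3 → ℝ)) :=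
    ⋃ π : Equiv.Perm (Fin 3), brunL π ×ˢ brunThS π with hD
  set T : Set ((Fin 3 → ℝ) × (Fin 3 → ℝ)) :=
    ⋃ π : Equiv.Perm (Fin 3), brunTh π ×ˢ brunLS π with hT
  refine ⟨D ∩ brunExt ⁻¹' Dᶜ, D \ T, ?_, ?_, ?_, ?_, ?_⟩
  · -- volume N₁ = 0
    refine measure_mono_null (fun p hp => ?_)
      (measure_iUnion_null fun π : Equiv.Perm (Fin 3) =>
        measure_iUnion_null fun i : Fin 3 =>
          measure_iUnion_null fun j : Fin 3 => null_S π i j)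
    obtain ⟨hpD, hpc⟩ := hp
    obtain ⟨π, hπ⟩ := mem_iUnion.1 hpD
    obtain ⟨⟨hxpos, hx01, hx12⟩, hapos, ha02⟩ := hπ
    have hbe : brunExt p = brunExtBranch π p := ext_eq π p hx01 hx12
    have himg : brunExtBranch π p ∈ brunTh π ×ˢ brunLS π :=
      branch_mapsTo π ⟨⟨hxpos, hx01, hx12⟩, hapos, ha02⟩
    have hni : ¬ Function.Injective (brunExtBranch π p).1 := by
      intro hinj
      exact hpc (show brunExt p ∈ D by rw [hbe]; exact claimT himg hinj)
    rw [Function.not_injective_iff] at hni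
    obtain ⟨i, j, hvij, hij⟩ := hni
    exact mem_iUnion.2 ⟨π, mem_iUnion.2 ⟨i, mem_iUnion.2 ⟨j, ⟨hij, hvij⟩⟩⟩⟩
  · -- volume N₂ = 0
    refine measure_mono_null (fun p hp => ?_)
      (measure_iUnion_null fun i : Fin 3 =>
        measure_iUnion_null fun j : Fin 3 => null_S2 i j)
    obtain ⟨hpD, hpT⟩ := hp
    obtain ⟨π, hπ⟩ := mem_iUnion.1 hpD
    have hni : ¬ Function.Injective p.2 := fun hinj => hpT (claimD hπ hinj)
    rw [Function.not_injective_iff] at hni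
    obtain ⟨i, j, hvij, hij⟩ := hni
    exact mem_iUnion.2 ⟨i, mem_iUnion.2 ⟨j, ⟨hij, hvij⟩⟩⟩
  · -- MapsTo
    rintro p ⟨hpD, hpN⟩
    obtain ⟨π, hπ⟩ := mem_iUnion.1 hpD
    obtain ⟨⟨hxpos, hx01, hx12⟩, hapos, ha02⟩ := hπ
    constructor
    · by_contra hc
      exact hpN ⟨hpD, hc⟩
    · intro hm
      refine hm.2 ?_
      rw [ext_eq π p hx01 hx12]
      exact mem_iUnion.2 ⟨π, branch_mapsTo π ⟨⟨hxpos, hx01, hx12⟩, hapos, ha02⟩⟩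
  · -- InjOn
    rintro p ⟨hpD, -⟩ q ⟨hqD, -⟩ heq
    obtain ⟨π, hπ⟩ := mem_iUnion.1 hpD
    obtain ⟨σ, hσ⟩ := mem_iUnion.1 hqD
    obtain ⟨⟨hxpos, hx01, hx12⟩, hapos, ha02⟩ := hπ
    obtain ⟨⟨hypos, hy01, hy12⟩, hbpos, hb02⟩ := hσ
    have hbe1 : brunExt p = brunExtBranch π p := ext_eq π p hx01 hx12
    have hbe2 : brunExt q = brunExtBranch σ q := ext_eq σ q hy01 hy12
    have heq' : brunExtBranch π p = brunExtBranch σ q := by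
      rw [← hbe1, ← hbe2, heq]
    have himg1 : brunExtBranch π p ∈ brunTh π ×ˢ brunLS π :=
      branch_mapsTo π ⟨⟨hxpos, hx01, hx12⟩, hapos, ha02⟩
    have himg2 : brunExtBranch σ q ∈ brunTh σ ×ˢ brunLS σ :=
      branch_mapsTo σ ⟨⟨hypos, hy01, hy12⟩, hbpos, hb02⟩
    have h1 : (brunExtBranch σ q).2 ∈ brunLS π := heq' ▸ himg1.2
    have h2 : (brunExtBranch σ q).2 ∈ brunLS σ := himg2.2
    obtain ⟨-, hA, hB⟩ := h1
    obtain ⟨-, hC, hE⟩ := h2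
    have w0 : Equiv.swap (1 : Fin 3) 2 0 = 0 := by decide
    have w1 : Equiv.swap (1 : Fin 3) 2 1 = 2 := by decide
    have w2 : Equiv.swap (1 : Fin 3) 2 2 = 1 := by decide
    have hps : π = σ := by
      have e : π * Equiv.swap 1 2 = σ * Equiv.swap 1 2 := by
        refine perm_eq_of_sorted (b := (brunExtBranch σ q).2) ?_ ?_ ?_ ?_ <;>
          simp only [Equiv.Perm.mul_apply, w0, w1, w2]
        · exact hA
        · exact hB
        · exact hC
        · exact hE
      exact mul_right_cancel e
    subst hps
    exact branch_inj π heq'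
  · -- SurjOn
    rintro q ⟨hqD, hqN⟩
    have hqT : q ∈ T := by
      by_contra hc
      exact hqN ⟨hqD, hc⟩
    obtain ⟨π, hπ⟩ := mem_iUnion.1 hqT
    obtain ⟨p, hpmem, hbp⟩ := (branch_bijOn π).surjOn hπ
    obtain ⟨⟨hxpos, hx01, hx12⟩, hapos, ha02⟩ := hpmem
    have hbrun : brunExt p = q := (ext_eq π p hx01 hx12).trans hbp
    refine ⟨p, ⟨mem_iUnion.2 ⟨π, ⟨⟨hxpos, hx01, hx12⟩, hapos, ha02⟩⟩, fun hN => ?_⟩, hbrun⟩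
    exact hN.2 (show brunExt p ∈ D by rw [hbrun]; exact hqD)
end

section
/- The iterated integral ∫₀^{1/3} ∫_{x₁}^{(1−x₁)/2} 1/(2·x₂·(1−x₂)·(1−x₁−x₂)) dx₂ dx₁ equals π²/24. -/
/-!
Swap the order of integration. For fixed `x₂ = x ∈ (0, 1/2)` the `x₁`-slice of the region is
`(0, min x (1 - 2x))`, and the inner integral is elementary,
`(log (1 - x) - log (max x (1 - 2x))) / (2x(1 - x))`. On `(1/3, 1/2)` this is the derivative of
`-(log ((1 - x) / x))² / 4` and contributes `(log 2)² / 4`; on `(0, 1/3)` it is the derivative of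
`Li₂ (x / (1 - x)) / 2` and contributes `Li₂ (1/2) / 2`. Euler's reflection formula
`Li₂ x + Li₂ (1 - x) = π² / 6 - log x log (1 - x)` gives `Li₂ (1/2) = π² / 12 - (log 2)² / 2`.
All integrands are nonnegative derivatives of functions continuous on closed intervals, which
gives the integrability needed for Fubini.
-/

open Real Set Filter Topology MeasureTheory intervalIntegral

lemma integrableOn_and_integral_eq_sub_of_hasDerivAt_of_nonneg {g g' : ℝ → ℝ} {a b : ℝ}
    (hab : a ≤ b) (hcont : ContinuousOn g (Icc a b))
    (hderiv : ∀ x ∈ Ioo a b, HasDerivAt g (g' x) x) (hpos : ∀ x ∈ Ioo a b, 0 ≤ g' x) :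
    IntegrableOn g' (Ioc a b) ∧ ∫ x in a..b, g' x = g b - g a := by
  have hint := integrableOn_deriv_of_nonneg hcont hderiv hpos
  exact ⟨hint, integral_eq_sub_of_hasDerivAt_of_le hab hcont hderiv
    ((intervalIntegrable_iff_integrableOn_Ioc_of_le hab).mpr hint)⟩

noncomputable def dilog (x : ℝ) : ℝ := ∑' n : ℕ, x ^ (n + 1) / ((n : ℝ) + 1) ^ 2

lemma dilog_zero : dilog 0 = 0 := by
  simp [dilog]

lemma hasSum_dilog_one :
    HasSum (fun n : ℕ => (1 : ℝ) ^ (n + 1) / ((n : ℝ) + 1) ^ 2) (π ^ 2 / 6) := by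
  have h := (hasSum_nat_add_iff (f := fun n : ℕ => (1 : ℝ) / (n : ℝ) ^ 2) 1).mpr
    (by simpa using hasSum_zeta_two)
  simpa using h

lemma dilog_one : dilog 1 = π ^ 2 / 6 :=
  hasSum_dilog_one.tsum_eq

lemma norm_dilog_term_le {x : ℝ} (hx : x ∈ Icc (-1) 1) (n : ℕ) :
    ‖x ^ (n + 1) / ((n : ℝ) + 1) ^ 2‖ ≤ 1 / ((n : ℝ) + 1) ^ 2 := by
  rw [norm_div, norm_pow, Real.norm_eq_abs, Real.norm_of_nonneg (by positivity)]
  gcongr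
  exact pow_le_one₀ (abs_nonneg x) (abs_le.mpr hx)

lemma continuousOn_dilog : ContinuousOn dilog (Icc (-1) 1) :=
  continuousOn_tsum (fun n => by fun_prop) (by simpa using hasSum_dilog_one.summable)
    (fun n x hx => norm_dilog_term_le hx n)

lemma hasSum_pow_div_succ {x : ℝ} (hx : |x| < 1) (hx0 : x ≠ 0) :
    HasSum (fun n : ℕ => x ^ n / ((n : ℝ) + 1)) (-log (1 - x) / x) := by
  have hterm : (fun n : ℕ => x ^ n / ((n : ℝ) + 1)) =
      fun n : ℕ => x ^ (n + 1) / ((n : ℝ) + 1) / x := by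
    funext n
    rw [pow_succ, mul_div_right_comm, mul_div_cancel_right₀ _ hx0]
  rw [hterm]
  exact (hasSum_pow_div_log_of_abs_lt_one hx).div_const x

lemma hasDerivAt_dilog {x : ℝ} (hx : |x| < 1) (hx0 : x ≠ 0) :
    HasDerivAt dilog (-log (1 - x) / x) x := by
  obtain ⟨r, hxr, hr⟩ := exists_between hx
  have hr0 : 0 < r := (abs_nonneg x).trans_lt hxr
  rw [← (hasSum_pow_div_succ hx hx0).tsum_eq]
  refine hasDerivAt_tsum_of_isPreconnected
    (g := fun (n : ℕ) (z : ℝ) => z ^ (n + 1) / ((n : ℝ) + 1) ^ 2)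
    (g' := fun (n : ℕ) (z : ℝ) => z ^ n / ((n : ℝ) + 1))
    (summable_geometric_of_lt_one hr0.le hr) isOpen_Ioo isPreconnected_Ioo
    (fun n y _ => ?_) (fun n y hy => ?_)
    (y₀ := 0) ⟨neg_neg_of_pos hr0, hr0⟩ (by simp) (abs_lt.mp hxr)
  · refine ((hasDerivAt_pow (n + 1) y).div_const (((n : ℝ) + 1) ^ 2)).congr_deriv ?_
    rw [Nat.add_sub_cancel]
    push_cast
    field_simp
  · rw [norm_div, norm_pow, Real.norm_eq_abs, Real.norm_of_nonneg (by positivity)]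
    calc |y| ^ n / ((n : ℝ) + 1) ≤ |y| ^ n := div_le_self (by positivity) (by simp)
      _ ≤ r ^ n := pow_le_pow_left₀ (abs_nonneg y) (abs_le.mpr ⟨hy.1.le, hy.2.le⟩) n

lemma tendsto_log_mul_log_one_sub_nhdsLT_one :
    Tendsto (fun x => log x * log (1 - x)) (𝓝[<] 1) (𝓝 0) := by
  have hbound : Tendsto (fun x : ℝ => |(1 - x) * log (1 - x)| / x) (𝓝[<] 1) (𝓝 0) := by
    have hcont : ContinuousAt (fun x : ℝ => |(1 - x) * log (1 - x)| / x) 1 :=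
      ((continuous_mul_log.comp (continuous_const.sub continuous_id)).abs.continuousAt).div
        continuousAt_id one_ne_zero
    simpa using hcont.tendsto.mono_left nhdsWithin_le_nhds
  refine squeeze_zero_norm' ?_ hbound
  filter_upwards [Ioo_mem_nhdsLT (zero_lt_one' ℝ)] with x ⟨hx0, hx1⟩
  have hlog : |log x| ≤ (1 - x) / x := by
    rw [abs_of_nonpos (log_nonpos hx0.le hx1.le), sub_div, div_self hx0.ne', one_div]
    linarith [one_sub_inv_le_log_of_pos hx0]
  calc ‖log x * log (1 - x)‖ = |log x| * |log (1 - x)| := by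
        rw [norm_mul, norm_eq_abs, norm_eq_abs]
    _ ≤ (1 - x) / x * |log (1 - x)| := by gcongr
    _ = |(1 - x) * log (1 - x)| / x := by rw [abs_mul, abs_of_pos (sub_pos.mpr hx1)]; ring

lemma hasDerivAt_dilog_add_dilog_one_sub {x : ℝ} (hx : x ∈ Ioo 0 1) :
    HasDerivAt (fun y => dilog y + dilog (1 - y) + log y * log (1 - y)) 0 x := by
  obtain ⟨hx0, hx1⟩ := hx
  have h1x : 0 < 1 - x := sub_pos.mpr hx1
  have hsub : HasDerivAt (fun y : ℝ => 1 - y) (-1) x := by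
    simpa using (hasDerivAt_id x).const_sub 1
  have hJ := hasDerivAt_dilog (abs_lt.mpr ⟨by linarith, hx1⟩) hx0.ne'
  have hJ' := (hasDerivAt_dilog (abs_lt.mpr ⟨by linarith, by linarith⟩) h1x.ne').comp x hsub
  have hL := (hasDerivAt_log hx0.ne').mul (hsub.log h1x.ne')
  refine ((hJ.add hJ').add hL).congr_deriv ?_
  rw [sub_sub_cancel]
  field_simp
  ring

lemma dilog_add_dilog_one_sub {x : ℝ} (hx : x ∈ Ioo 0 1) :
    dilog x + dilog (1 - x) = π ^ 2 / 6 - log x * log (1 - x) := by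
  set N := fun y => dilog y + dilog (1 - y) + log y * log (1 - y)
  obtain ⟨c, hc⟩ := isOpen_Ioo.exists_is_const_of_deriv_eq_zero isPreconnected_Ioo
    (fun y hy => (hasDerivAt_dilog_add_dilog_one_sub hy).differentiableAt.differentiableWithinAt)
    (fun y hy => (hasDerivAt_dilog_add_dilog_one_sub hy).deriv)
  have hlim : Tendsto N (𝓝[<] 1) (𝓝 (π ^ 2 / 6)) := by
    have h1 : Tendsto dilog (𝓝[<] 1) (𝓝 (π ^ 2 / 6)) := by
      rw [← dilog_one]
      exact (continuousOn_dilog 1 (by norm_num)).tendsto.mono_left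
        (nhdsWithin_le_of_mem (Icc_mem_nhdsLT (by norm_num)))
    have hsub : Tendsto (fun y : ℝ => 1 - y) (𝓝[<] 1) (𝓝 0) := by
      have h := ((continuous_sub_left (1 : ℝ)).tendsto 1).mono_left
        (nhdsWithin_le_nhds (s := Iio 1))
      rwa [sub_self] at h
    have h0 : Tendsto (fun y => dilog (1 - y)) (𝓝[<] 1) (𝓝 0) := by
      rw [← dilog_zero]
      exact (continuousOn_dilog.continuousAt
        (Icc_mem_nhds (by norm_num) (by norm_num))).tendsto.comp hsub
    simpa using (h1.add h0).add tendsto_log_mul_log_one_sub_nhdsLT_one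
  have hc1 : c = π ^ 2 / 6 := by
    refine tendsto_nhds_unique (tendsto_const_nhds.congr' ?_) hlim
    filter_upwards [Ioo_mem_nhdsLT (zero_lt_one' ℝ)] with y hy using (hc y hy).symm
  have hNx : N x = c := hc x hx
  simp only [N] at hNx
  linarith

lemma dilog_half : dilog (1 / 2) = π ^ 2 / 12 - log 2 ^ 2 / 2 := by
  have h := dilog_add_dilog_one_sub (x := 1 / 2) (by norm_num)
  rw [show (1 : ℝ) - 1 / 2 = 1 / 2 by norm_num, one_div, log_inv] at h
  linarith

-- `x₂ < (1 - x₁) / 2` is `x₂ < x₃`.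
def sortedSimplex : Set (ℝ × ℝ) := {p | 0 < p.1 ∧ p.1 < p.2 ∧ p.2 < (1 - p.1) / 2}

noncomputable def brunDensity (p : ℝ × ℝ) : ℝ := 1 / (2 * p.2 * (1 - p.2) * (1 - p.1 - p.2))

lemma measurableSet_sortedSimplex : MeasurableSet sortedSimplex :=
  (measurableSet_lt measurable_const measurable_fst).inter
    ((measurableSet_lt measurable_fst measurable_snd).inter
      (measurableSet_lt measurable_snd (by fun_prop)))

lemma mk_mem_sortedSimplex_iff_fst {a x : ℝ} :
    (a, x) ∈ sortedSimplex ↔ a ∈ Ioo 0 (min x (1 - 2 * x)) := by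
  simp only [sortedSimplex, mem_ofPred_eq, mem_Ioo, lt_min_iff]
  constructor <;> rintro ⟨h₁, h₂, h₃⟩ <;> refine ⟨h₁, h₂, by linarith⟩

lemma mk_mem_sortedSimplex_iff_snd {a x : ℝ} (ha : 0 < a) :
    (a, x) ∈ sortedSimplex ↔ x ∈ Ioo a ((1 - a) / 2) := by
  simp [sortedSimplex, ha]

lemma fst_mem_Ioo_of_mem_sortedSimplex {p : ℝ × ℝ} (hp : p ∈ sortedSimplex) :
    p.1 ∈ Ioo 0 (1 / 3) := by
  obtain ⟨h₁, h₂, h₃⟩ := hp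
  exact ⟨h₁, by linarith⟩

lemma snd_mem_Ioo_of_mem_sortedSimplex {p : ℝ × ℝ} (hp : p ∈ sortedSimplex) :
    p.2 ∈ Ioo 0 (1 / 2) := by
  obtain ⟨h₁, h₂, h₃⟩ := hp
  exact ⟨by linarith, by linarith⟩

lemma brunDensity_nonneg_of_mem {p : ℝ × ℝ} (hp : p ∈ sortedSimplex) : 0 ≤ brunDensity p := by
  obtain ⟨h₁, h₂, h₃⟩ := hp
  have : 0 < 1 - p.1 - p.2 := by linarith
  have : 0 < 1 - p.2 := by linarith
  have : 0 < p.2 := by linarith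
  unfold brunDensity
  positivity

lemma measurable_brunDensity : Measurable brunDensity :=
  measurable_const.div (by fun_prop)

noncomputable def brunMarginal (x : ℝ) : ℝ :=
  (log (1 - x) - log (max x (1 - 2 * x))) / (2 * x * (1 - x))

lemma integrableOn_and_integral_brunDensity_fst {x : ℝ} (hx : x ∈ Ioo 0 (1 / 2)) :
    IntegrableOn (fun a => brunDensity (a, x)) (Ioc 0 (min x (1 - 2 * x))) ∧
      ∫ a in 0..min x (1 - 2 * x), brunDensity (a, x) = brunMarginal x := by
  obtain ⟨hx0, hx2⟩ := hx
  have hm : 1 - min x (1 - 2 * x) - x = max x (1 - 2 * x) := by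
    rcases le_total x (1 - 2 * x) with h | h
    · rw [min_eq_left h, max_eq_right h]; ring
    · rw [min_eq_right h, max_eq_left h]; ring
  have hpos : ∀ a ∈ Icc 0 (min x (1 - 2 * x)), 0 < 1 - a - x := fun a ha => by
    have := ha.2.trans (min_le_right _ _)
    linarith
  have h1x : 0 < 1 - x := by linarith
  set g := fun a => -log (1 - a - x) / (2 * x * (1 - x))
  have hcont : ContinuousOn g (Icc 0 (min x (1 - 2 * x))) := fun a ha =>
    (((continuousAt_const.sub continuousAt_id).sub continuousAt_const).log
      (hpos a ha).ne').neg.div_const _ |>.continuousWithinAt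
  have hderiv : ∀ a ∈ Ioo 0 (min x (1 - 2 * x)), HasDerivAt g (brunDensity (a, x)) a := by
    intro a ha
    have ha' := hpos a (Ioo_subset_Icc_self ha)
    have hsub : HasDerivAt (fun a => 1 - a - x) (-1) a := by
      simpa using ((hasDerivAt_id a).const_sub 1).sub_const x
    refine ((hsub.log ha'.ne').neg.div_const _).congr_deriv ?_
    simp only [brunDensity]
    field_simp
  have hnonneg : ∀ a ∈ Ioo 0 (min x (1 - 2 * x)), 0 ≤ brunDensity (a, x) := fun a ha => by
    have := hpos a (Ioo_subset_Icc_self ha)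
    simp only [brunDensity]
    positivity
  obtain ⟨hint, heq⟩ := integrableOn_and_integral_eq_sub_of_hasDerivAt_of_nonneg
    (le_min hx0.le (by linarith)) hcont hderiv hnonneg
  refine ⟨hint, heq.trans ?_⟩
  simp only [g, brunMarginal]
  rw [hm, sub_zero]
  ring

lemma indicator_sortedSimplex_fst (f : ℝ × ℝ → ℝ) (x : ℝ) :
    (fun a => sortedSimplex.indicator f (a, x)) =
      (Ioo 0 (min x (1 - 2 * x))).indicator (fun a => f (a, x)) := by
  funext a
  simp only [indicator, mk_mem_sortedSimplex_iff_fst]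

lemma indicator_sortedSimplex_snd (f : ℝ × ℝ → ℝ) {a : ℝ} (ha : 0 < a) :
    (fun x => sortedSimplex.indicator f (a, x)) =
      (Ioo a ((1 - a) / 2)).indicator (fun x => f (a, x)) := by
  funext x
  simp only [indicator, mk_mem_sortedSimplex_iff_snd ha]

lemma indicator_sortedSimplex_of_snd_notMem (f : ℝ × ℝ → ℝ) {x : ℝ} (hx : x ∉ Ioo 0 (1 / 2))
    (a : ℝ) : sortedSimplex.indicator f (a, x) = 0 :=
  indicator_of_notMem (fun h => hx (snd_mem_Ioo_of_mem_sortedSimplex h)) f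

lemma integrable_indicator_sortedSimplex_fst (x : ℝ) :
    Integrable (fun a => sortedSimplex.indicator brunDensity (a, x)) := by
  by_cases hx : x ∈ Ioo 0 (1 / 2)
  · rw [indicator_sortedSimplex_fst, integrable_indicator_iff measurableSet_Ioo]
    exact (integrableOn_and_integral_brunDensity_fst hx).1.mono_set Ioo_subset_Ioc_self
  · simp only [indicator_sortedSimplex_of_snd_notMem _ hx]
    exact integrable_zero _ _ _

lemma integral_indicator_sortedSimplex_fst (x : ℝ) :
    ∫ a, sortedSimplex.indicator brunDensity (a, x) = (Ioo 0 (1 / 2)).indicator brunMarginal x := by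
  by_cases hx : x ∈ Ioo 0 (1 / 2)
  · rw [indicator_sortedSimplex_fst, MeasureTheory.integral_indicator measurableSet_Ioo,
      ← integral_Ioc_eq_integral_Ioo, ← integral_of_le (le_min hx.1.le (by linarith [hx.2])),
      (integrableOn_and_integral_brunDensity_fst hx).2, indicator_of_mem hx]
  · simp only [indicator_sortedSimplex_of_snd_notMem _ hx, integral_zero, indicator_of_notMem hx]

lemma brunMarginal_nonneg {x : ℝ} (hx : x ∈ Ioo 0 (1 / 2)) : 0 ≤ brunMarginal x := by
  obtain ⟨hx0, hx2⟩ := hx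
  have hmax : 0 < max x (1 - 2 * x) := lt_max_of_lt_left hx0
  have hle : max x (1 - 2 * x) ≤ 1 - x := max_le (by linarith) (by linarith)
  have h1x : 0 < 1 - x := by linarith
  exact div_nonneg (sub_nonneg.mpr (log_le_log hmax hle)) (by positivity)

lemma hasDerivAt_dilog_div_one_sub {x : ℝ} (hx : x ∈ Ioo 0 (1 / 3)) :
    HasDerivAt (fun x => dilog (x / (1 - x)) / 2) (brunMarginal x) x := by
  obtain ⟨hx0, hx3⟩ := hx
  have h1x : 0 < 1 - x := by linarith
  have h12x : 0 < 1 - 2 * x := by linarith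
  have hy0 : 0 < x / (1 - x) := div_pos hx0 h1x
  have hy1 : x / (1 - x) < 1 := (div_lt_one h1x).mpr (by linarith)
  have hdiv : HasDerivAt (fun x => x / (1 - x)) (1 / (1 - x) ^ 2) x := by
    refine ((hasDerivAt_id x).div ((hasDerivAt_id x).const_sub 1) h1x.ne').congr_deriv ?_
    simp only [id]
    ring
  refine (((hasDerivAt_dilog (abs_lt.mpr ⟨by linarith, hy1⟩) hy0.ne').comp x hdiv).div_const
    2).congr_deriv ?_
  have h1y : 1 - x / (1 - x) = (1 - 2 * x) / (1 - x) := by field_simp; ring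
  rw [brunMarginal, max_eq_right (by linarith), h1y, log_div h12x.ne' h1x.ne']
  field_simp
  ring

lemma hasDerivAt_neg_sq_log_div_four {x : ℝ} (hx : x ∈ Icc (1 / 3) (1 / 2)) :
    HasDerivAt (fun x => -(log (1 - x) - log x) ^ 2 / 4) (brunMarginal x) x := by
  obtain ⟨hx3, hx2⟩ := hx
  have hx0 : 0 < x := by linarith
  have h1x : 0 < 1 - x := by linarith
  have hsub : HasDerivAt (fun x : ℝ => 1 - x) (-1) x := by
    simpa using (hasDerivAt_id x).const_sub 1
  refine ((((hsub.log h1x.ne').sub (hasDerivAt_log hx0.ne')).pow 2).neg.div_const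
    4).congr_deriv ?_
  rw [brunMarginal, max_eq_left (by linarith), Pi.sub_apply]
  field_simp
  ring

lemma integrableOn_and_integral_brunMarginal :
    IntegrableOn brunMarginal (Ioc 0 (1 / 2)) ∧
      ∫ x in 0..1 / 2, brunMarginal x = dilog (1 / 2) / 2 + log 2 ^ 2 / 4 := by
  have hdiv : ContinuousOn (fun x : ℝ => x / (1 - x)) (Icc 0 (1 / 3)) := fun x hx =>
    (continuousAt_id.div (continuousAt_const.sub continuousAt_id)
      (show 0 < (1 : ℝ) - x by linarith [hx.2]).ne').continuousWithinAt
  have hcont₁ : ContinuousOn (fun x => dilog (x / (1 - x)) / 2) (Icc 0 (1 / 3)) := by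
    refine (continuousOn_dilog.comp hdiv fun x hx => ?_).div_const 2
    have h1x : 0 < 1 - x := by linarith [hx.2]
    exact ⟨by linarith [div_nonneg hx.1 h1x.le], (div_le_one h1x).mpr (by linarith [hx.2])⟩
  obtain ⟨hint₁, heq₁⟩ := integrableOn_and_integral_eq_sub_of_hasDerivAt_of_nonneg
    (g := fun x => dilog (x / (1 - x)) / 2) (by norm_num) hcont₁
    (fun x hx => hasDerivAt_dilog_div_one_sub hx)
    (fun x hx => brunMarginal_nonneg ⟨hx.1, by linarith [hx.2]⟩)
  obtain ⟨hint₂, heq₂⟩ := integrableOn_and_integral_eq_sub_of_hasDerivAt_of_nonneg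
    (g := fun x => -(log (1 - x) - log x) ^ 2 / 4) (a := 1 / 3) (b := 1 / 2) (by norm_num)
    (fun x hx => (hasDerivAt_neg_sq_log_div_four hx).continuousAt.continuousWithinAt)
    (fun x hx => hasDerivAt_neg_sq_log_div_four (Ioo_subset_Icc_self hx))
    (fun x hx => brunMarginal_nonneg ⟨by linarith [hx.1], hx.2⟩)
  refine ⟨?_, ?_⟩
  · rw [← Ioc_union_Ioc_eq_Ioc (b := 1 / 3) (by norm_num) (by norm_num)]
    exact hint₁.union hint₂
  have hlog : log (1 - 1 / 3) - log (1 / 3) = log 2 := by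
    rw [← log_div (by norm_num) (by norm_num)]
    norm_num
  rw [← integral_add_adjacent_intervals
    ((intervalIntegrable_iff_integrableOn_Ioc_of_le (by norm_num)).mpr hint₁)
    ((intervalIntegrable_iff_integrableOn_Ioc_of_le (by norm_num)).mpr hint₂), heq₁, heq₂, hlog]
  norm_num [dilog_zero]
  ring

lemma integral_integral_eq_integral_integral_indicator_sortedSimplex :
    (∫ x₁ in (0:ℝ)..(1/3), ∫ x₂ in x₁..((1 - x₁)/2),
        1 / (2 * x₂ * (1 - x₂) * (1 - x₁ - x₂))) =
      ∫ a, ∫ x, sortedSimplex.indicator brunDensity (a, x) := by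
  have hzero : ∀ a ∉ Ioc (0 : ℝ) (1 / 3), ∫ x, sortedSimplex.indicator brunDensity (a, x) = 0 :=
    fun a ha => by
      have hS : ∀ x, sortedSimplex.indicator brunDensity (a, x) = 0 := fun x =>
        indicator_of_notMem
          (fun h => ha (Ioo_subset_Ioc_self (fst_mem_Ioo_of_mem_sortedSimplex h))) _
      simp only [hS, integral_zero]
  rw [integral_of_le (by norm_num), ← setIntegral_eq_integral_of_forall_compl_eq_zero hzero]
  refine setIntegral_congr_fun measurableSet_Ioc fun a ha => ?_
  rw [indicator_sortedSimplex_snd _ ha.1, MeasureTheory.integral_indicator measurableSet_Ioo,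
    ← integral_Ioc_eq_integral_Ioo, ← integral_of_le (by linarith [ha.2])]
  rfl

lemma integrable_indicator_sortedSimplex :
    Integrable (sortedSimplex.indicator brunDensity) (volume.prod volume) := by
  refine (integrable_prod_iff'
    (measurable_brunDensity.indicator measurableSet_sortedSimplex).aestronglyMeasurable).mpr
    ⟨ae_of_all _ integrable_indicator_sortedSimplex_fst, ?_⟩
  have hnorm : ∀ x, ∫ a, ‖sortedSimplex.indicator brunDensity (a, x)‖ =
      (Ioo 0 (1 / 2)).indicator brunMarginal x := fun x => by
    rw [← integral_indicator_sortedSimplex_fst]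
    congr 1 with a
    exact norm_of_nonneg (indicator_nonneg (fun p hp => brunDensity_nonneg_of_mem hp) _)
  simp_rw [hnorm]
  exact (integrable_indicator_iff measurableSet_Ioo).mpr
    (integrableOn_and_integral_brunMarginal.1.mono_set Ioo_subset_Ioc_self)

/-- The mass of the Brun invariant density on the sorted part of the simplex:
`∫₀^{1/3} ∫_{x₁}^{(1-x₁)/2} 1/(2 x₂ (1-x₂) (1-x₁-x₂)) dx₂ dx₁ = π²/24`. -/
theorem stmt_16 :
    (∫ x₁ in (0:ℝ)..(1/3), ∫ x₂ in x₁..((1 - x₁)/2),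
        1 / (2 * x₂ * (1 - x₂) * (1 - x₁ - x₂))) = Real.pi ^ 2 / 24 := by
  calc _ = ∫ a, ∫ x, sortedSimplex.indicator brunDensity (a, x) :=
        integral_integral_eq_integral_integral_indicator_sortedSimplex
    _ = ∫ x, ∫ a, sortedSimplex.indicator brunDensity (a, x) :=
        integral_integral_swap integrable_indicator_sortedSimplex
    _ = ∫ x in 0..1 / 2, brunMarginal x := by
        simp_rw [integral_indicator_sortedSimplex_fst]
        rw [MeasureTheory.integral_indicator measurableSet_Ioo, ← integral_Ioc_eq_integral_Ioo,
          integral_of_le (by norm_num)]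
    _ = dilog (1 / 2) / 2 + log 2 ^ 2 / 4 := integrableOn_and_integral_brunMarginal.2
    _ = π ^ 2 / 24 := by
        rw [dilog_half]
        ring
end

section
/- Let d ≥ 2 and let π be a permutation of {1,…,d}. Define the subsets of ℝ^d: Λ_π = {x ∈ (0,∞)^d : x_{π(1)} < x_{π(2)} < ⋯ < x_{π(d)}}, Θ_π = {x ∈ (0,∞)^d : x_{π(1)} < x_{π(2)} < ⋯ < x_{π(d−1)}}, Λ*_π = {a ∈ (0,∞)^d : a_{π(i)} < a_{π(d)} < a_{π(d−1)} for all i < d−1}, Θ*_π = {a ∈ (0,∞)^d : a_{π(i)} < a_{π(d)} for all i < d−1}. Define F̃ on Λ_π × (0,∞)^d by F̃(x, a) = (x′, a′) where x′_{π(d)} = x_{π(d)} − x_{π(d−1)}, a′_{π(d−1)} = a_{π(d−1)} + a_{π(d)}, and all other coordinates are unchanged. Then F̃ maps Λ_π × Θ*_π bijectively onto Θ_π × Λ*_π. -/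
open Set

/-- For the `d`-dimensional Brun algorithm (`d ≥ 2`) and any permutation `π` of `{1,…,d}`,
the natural extension branch `F̃(x,a) = (x′,a′)`, where `x′_{π(d)} = x_{π(d)} - x_{π(d-1)}`,
`a′_{π(d-1)} = a_{π(d-1)} + a_{π(d)}` and all other coordinates are unchanged, maps
`Λ_π × Θ*_π` bijectively onto `Θ_π × Λ*_π`. -/
theorem stmt_18 (d : ℕ) (hd : 2 ≤ d) (π : Equiv.Perm (Fin d)) :
    Set.BijOn
      (fun p : (Fin d → ℝ) × (Fin d → ℝ) =>
        (Function.update p.1 (π ⟨d - 1, by omega⟩)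
            (p.1 (π ⟨d - 1, by omega⟩) - p.1 (π ⟨d - 2, by omega⟩)),
         Function.update p.2 (π ⟨d - 2, by omega⟩)
            (p.2 (π ⟨d - 2, by omega⟩) + p.2 (π ⟨d - 1, by omega⟩))))
      -- Λ_π × Θ*_π
      (({x : Fin d → ℝ | (∀ i, 0 < x i) ∧ ∀ i j : Fin d, i < j → x (π i) < x (π j)}) ×ˢ
       ({a : Fin d → ℝ | (∀ i, 0 < a i) ∧
          ∀ i : Fin d, (i : ℕ) < d - 2 → a (π i) < a (π ⟨d - 1, by omega⟩)}))
      -- Θ_π × Λ*_π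
      (({x : Fin d → ℝ | (∀ i, 0 < x i) ∧
          ∀ i j : Fin d, i < j → (j : ℕ) < d - 1 → x (π i) < x (π j)}) ×ˢ
       ({a : Fin d → ℝ | (∀ i, 0 < a i) ∧
          (∀ i : Fin d, (i : ℕ) < d - 2 → a (π i) < a (π ⟨d - 1, by omega⟩)) ∧
          a (π ⟨d - 1, by omega⟩) < a (π ⟨d - 2, by omega⟩)})) := by
  have hd1 : d - 1 < d := by omega
  have hd2 : d - 2 < d := by omega
  have hne : (⟨d - 2, hd2⟩ : Fin d) ≠ (⟨d - 1, hd1⟩ : Fin d) := by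
    simp only [ne_eq, Fin.mk.injEq]; omega
  have hlt : (⟨d - 2, hd2⟩ : Fin d) < (⟨d - 1, hd1⟩ : Fin d) := by
    simp only [Fin.mk_lt_mk]; omega
  have hkne : π ⟨d - 2, hd2⟩ ≠ π ⟨d - 1, hd1⟩ := fun h => hne (π.injective h)
  refine Set.InvOn.bijOn (f' := fun p : (Fin d → ℝ) × (Fin d → ℝ) =>
      (Function.update p.1 (π ⟨d - 1, hd1⟩)
          (p.1 (π ⟨d - 1, hd1⟩) + p.1 (π ⟨d - 2, hd2⟩)),
       Function.update p.2 (π ⟨d - 2, hd2⟩)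
          (p.2 (π ⟨d - 2, hd2⟩) - p.2 (π ⟨d - 1, hd1⟩)))) ⟨?_, ?_⟩ ?_ ?_
  · -- left inverse
    rintro ⟨x, a⟩ -
    refine Prod.ext ?_ ?_ <;> funext i <;> simp only <;>
      simp only [Function.update_apply, if_pos, if_neg hkne, if_neg hkne.symm] <;>
      split_ifs with h <;> simp_all
  · -- right inverse
    rintro ⟨x, a⟩ -
    refine Prod.ext ?_ ?_ <;> funext i <;> simp only <;>
      simp only [Function.update_apply, if_pos, if_neg hkne, if_neg hkne.symm] <;>
      split_ifs with h <;> simp_all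
  · -- MapsTo forward
    rintro ⟨x, a⟩ hmem
    simp only [Set.mem_prod, Set.mem_setOf_eq] at hmem ⊢
    obtain ⟨⟨hx0, hxm⟩, ha0, ham⟩ := hmem
    have hxlt : x (π ⟨d - 2, hd2⟩) < x (π ⟨d - 1, hd1⟩) := hxm _ _ hlt
    refine ⟨⟨?_, ?_⟩, ?_, ?_, ?_⟩
    · intro i
      rcases eq_or_ne i (π ⟨d - 1, hd1⟩) with h | h
      · rw [h, Function.update_self]; linarith
      · rw [Function.update_of_ne h]; exact hx0 i
    · intro i j hij hj
      have hjne : π j ≠ π ⟨d - 1, hd1⟩ := by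
        refine fun h => ?_
        have := π.injective h
        have : (j : ℕ) = d - 1 := by rw [this]
        omega
      have hine : π i ≠ π ⟨d - 1, hd1⟩ := by
        refine fun h => ?_
        have := π.injective h
        have : (i : ℕ) = d - 1 := by rw [this]
        have : (i : ℕ) < (j : ℕ) := hij
        omega
      rw [Function.update_of_ne hjne, Function.update_of_ne hine]
      exact hxm _ _ hij
    · intro i
      rcases eq_or_ne i (π ⟨d - 2, hd2⟩) with h | h
      · rw [h, Function.update_self]
        have := ha0 (π ⟨d - 2, hd2⟩); have := ha0 (π ⟨d - 1, hd1⟩); linarith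
      · rw [Function.update_of_ne h]; exact ha0 i
    · intro i hi
      have hine : π i ≠ π ⟨d - 2, hd2⟩ := by
        refine fun h => ?_
        have := π.injective h
        have : (i : ℕ) = d - 2 := by rw [this]
        omega
      rw [Function.update_of_ne hine, Function.update_of_ne hkne.symm]
      exact ham i hi
    · rw [Function.update_of_ne hkne.symm, Function.update_self]
      have := ha0 (π ⟨d - 2, hd2⟩); linarith
  · -- MapsTo backward
    rintro ⟨y, b⟩ hmem
    simp only [Set.mem_prod, Set.mem_setOf_eq] at hmem ⊢
    obtain ⟨⟨hy0, hym⟩, hb0, hbm, hb3⟩ := hmem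
    refine ⟨⟨?_, ?_⟩, ?_, ?_⟩
    · intro i
      rcases eq_or_ne i (π ⟨d - 1, hd1⟩) with h | h
      · rw [h, Function.update_self]
        have := hy0 (π ⟨d - 1, hd1⟩); have := hy0 (π ⟨d - 2, hd2⟩); linarith
      · rw [Function.update_of_ne h]; exact hy0 i
    · intro i j hij
      rcases eq_or_ne j (⟨d - 1, hd1⟩ : Fin d) with hj | hj
      · subst hj
        rw [Function.update_self]
        have hine : π i ≠ π ⟨d - 1, hd1⟩ := fun h => absurd (π.injective h) hij.ne
        rw [Function.update_of_ne hine]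
        rcases eq_or_ne i (⟨d - 2, hd2⟩ : Fin d) with hi | hi
        · subst hi
          have := hy0 (π ⟨d - 1, hd1⟩); linarith
        · have hival : (i : ℕ) < d - 2 := by
            have h1 : (i : ℕ) < d - 1 := hij
            have h2 : (i : ℕ) ≠ d - 2 := fun h => hi (Fin.val_injective h)
            omega
          have : y (π i) < y (π ⟨d - 2, hd2⟩) := by
            refine hym i ⟨d - 2, hd2⟩ ?_ ?_
            · exact hival
            · simpa using by omega
          have := hy0 (π ⟨d - 1, hd1⟩); linarith
      · have hjval : (j : ℕ) < d - 1 := by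
          have h1 : (j : ℕ) < d := j.isLt
          have h2 : (j : ℕ) ≠ d - 1 := fun h => hj (Fin.val_injective h)
          omega
        have hjne : π j ≠ π ⟨d - 1, hd1⟩ := fun h => hj (π.injective h)
        have hine : π i ≠ π ⟨d - 1, hd1⟩ := by
          refine fun h => ?_
          have := π.injective h
          have : (i : ℕ) = d - 1 := by rw [this]
          have : (i : ℕ) < (j : ℕ) := hij
          omega
        rw [Function.update_of_ne hjne, Function.update_of_ne hine]
        exact hym i j hij hjval
    · intro i
      rcases eq_or_ne i (π ⟨d - 2, hd2⟩) with h | h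
      · rw [h, Function.update_self]; linarith
      · rw [Function.update_of_ne h]; exact hb0 i
    · intro i hi
      have hine : π i ≠ π ⟨d - 2, hd2⟩ := by
        refine fun h => ?_
        have := π.injective h
        have : (i : ℕ) = d - 2 := by rw [this]
        omega
      rw [Function.update_of_ne hine, Function.update_of_ne hkne.symm]
      exact hbm i hi
end

section
/- Let d ≥ 1, let I be a subset of {1,…,d} with |I| ≥ 2, and let ℓ ∈ I. Let (x₁,…,x_d) be positive real numbers with Σ_{i=1}^d x_i = 1 and Σ_{i∈I} x_i < 1. Let P_{I,ℓ} ⊂ ℝ^I be the set of real vectors (β_i : i ∈ I) satisfying: β_i < 0 for all i ∈ I ∖ {ℓ}; Σ_{j∈I} β_j x_j − β_i < 1 for all i ∈ I; and Σ_{j∈I} β_j x_j < 1. Then the |I|-dimensional Lebesgue measure of P_{I,ℓ} satisfies Vol(P_{I,ℓ}) = (1/(|I|·(1 − Σ_{i∈I} x_i))) · Σ_{k ∈ I∖{ℓ}} Vol(P_{I∖{k},ℓ}), where for a subset J ⊆ I with ℓ ∈ J the polytope P_{J,ℓ} ⊂ ℝ^J is defined by the same three families of inequalities with I replaced by J. 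-/
open MeasureTheory

open Pointwise

/-- The polytope `P_{J,ℓ} ⊂ ℝ^J` of vectors `(β_i : i ∈ J)` satisfying `β_i < 0` for
`i ∈ J \ {ℓ}`, `∑_{j∈J} β_j x_j - β_i < 1` for all `i ∈ J`, and `∑_{j∈J} β_j x_j < 1`. -/
def brunPolytope {d : ℕ} (x : Fin d → ℝ) (ℓ : Fin d) (J : Finset (Fin d)) :
    Set ({i // i ∈ J} → ℝ) :=
  {β | (∀ i : {i // i ∈ J}, i.1 ≠ ℓ → β i < 0) ∧
       (∀ i : {i // i ∈ J}, (∑ j : {i // i ∈ J}, β j * x j.1) - β i < 1) ∧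
       (∑ j : {i // i ∈ J}, β j * x j.1) < 1}

namespace Brun19

variable {d : ℕ}

abbrev Idx (I : Finset (Fin d)) := {i // i ∈ I}

noncomputable def lin (x : Fin d → ℝ) (I : Finset (Fin d)) (γ : Idx I → ℝ) : ℝ :=
  ∑ j : Idx I, γ j * x j.1

def cone (x : Fin d → ℝ) (I : Finset (Fin d)) : Set (Idx I → ℝ) :=
  {γ | ∀ i : Idx I, lin x I γ < γ i}

def kmax (x : Fin d → ℝ) (ℓ : Fin d) (I : Finset (Fin d)) (k : Idx I) : Set (Idx I → ℝ) :=
  {γ | γ ∈ cone x I ∧ ∀ j : Idx I, j.1 ≠ ℓ → j ≠ k → γ j < γ k}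

def dset (x : Fin d → ℝ) (ℓ : Fin d) (I : Finset (Fin d)) (k : Idx I) (c : ℝ) :
    Set (Idx I → ℝ) := {γ | γ ∈ kmax x ℓ I k ∧ γ k < c}

def gset (x : Fin d → ℝ) (ℓ : Fin d) (I : Finset (Fin d)) (c : ℝ) : Set (Idx I → ℝ) :=
  {γ | γ ∈ cone x I ∧ ∀ i : Idx I, i.1 ≠ ℓ → γ i < c}

def ins (I : Finset (Fin d)) (k : Idx I) (h : ℝ) (z : {j : Idx I // j ≠ k} → ℝ) :
    Idx I → ℝ := fun i => if hik : i = k then h else z ⟨i, hik⟩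

def slice (x : Fin d → ℝ) (ℓ : Fin d) (I : Finset (Fin d)) (k : Idx I) (h : ℝ) :
    Set ({j : Idx I // j ≠ k} → ℝ) := {z | ins I k h z ∈ kmax x ℓ I k}

@[simp] lemma ins_self (I : Finset (Fin d)) (k : Idx I) (h : ℝ) (z) : ins I k h z k = h :=
  dif_pos rfl

lemma ins_ne (I : Finset (Fin d)) (k : Idx I) (h : ℝ) (z) {i : Idx I} (hik : i ≠ k) :
    ins I k h z i = z ⟨i, hik⟩ := dif_neg hik

lemma sum_split {ι : Type*} [Fintype ι] [DecidableEq ι] (k : ι) (f : ι → ℝ) :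
    ∑ j, f j = f k + ∑ j : {j : ι // j ≠ k}, f j.1 := by
  rw [← Finset.add_sum_erase Finset.univ f (Finset.mem_univ k)]
  congr 1
  exact Finset.sum_subtype _ (fun x => by simp) f

lemma lin_ins (x : Fin d → ℝ) (I : Finset (Fin d)) (k : Idx I) (h : ℝ) (z) :
    lin x I (ins I k h z) = h * x k.1 + ∑ j : {j : Idx I // j ≠ k}, z j * x j.1.1 := by
  unfold lin
  rw [sum_split k]
  simp only [ins_self]
  congr 1
  exact Finset.sum_congr rfl fun j _ => by rw [ins_ne _ _ _ _ j.2]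

lemma lin_smul (x : Fin d → ℝ) (I : Finset (Fin d)) (r : ℝ) (γ : Idx I → ℝ) :
    lin x I (r • γ) = r * lin x I γ := by
  unfold lin
  rw [Finset.mul_sum]
  exact Finset.sum_congr rfl fun j _ => by simp [mul_assoc]

lemma ins_smul (I : Finset (Fin d)) (k : Idx I) (r h : ℝ) (z) :
    ins I k (r * h) (r • z) = r • ins I k h z := by
  funext i
  by_cases hik : i = k
  · subst hik; simp [ins_self]
  · simp [ins_ne _ _ _ _ hik, Pi.smul_apply, smul_eq_mul]

lemma kmax_smul (x : Fin d → ℝ) (ℓ : Fin d) (I : Finset (Fin d)) (k : Idx I) {r : ℝ}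
    (hr : 0 < r) {γ} (hγ : γ ∈ kmax x ℓ I k) : r • γ ∈ kmax x ℓ I k := by
  obtain ⟨h1, h2⟩ := hγ
  refine ⟨fun i => ?_, fun j hj hjk => ?_⟩
  · rw [lin_smul]; simpa using (mul_lt_mul_iff_right₀ hr).2 (h1 i)
  · simpa using (mul_lt_mul_iff_right₀ hr).2 (h2 j hj hjk)

lemma slice_smul (x : Fin d → ℝ) (ℓ : Fin d) (I : Finset (Fin d)) (k : Idx I) {h : ℝ}
    (hh : 0 < h) : slice x ℓ I k h = h • slice x ℓ I k 1 := by
  ext z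
  constructor
  · intro hz
    refine ⟨h⁻¹ • z, ?_, by simp [smul_smul, mul_inv_cancel₀ hh.ne']⟩
    have h2 : ins I k (h⁻¹ * h) (h⁻¹ • z) = h⁻¹ • ins I k h z := ins_smul I k h⁻¹ h z
    rw [inv_mul_cancel₀ hh.ne'] at h2
    show ins I k 1 (h⁻¹ • z) ∈ kmax x ℓ I k
    rw [h2]
    exact kmax_smul x ℓ I k (inv_pos.2 hh) hz
  · rintro ⟨w, hw, rfl⟩
    show ins I k h (h • w) ∈ kmax x ℓ I k
    have h2 : ins I k (h * 1) (h • w) = h • ins I k 1 w := ins_smul I k h 1 w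
    rw [mul_one] at h2
    rw [h2]
    exact kmax_smul x ℓ I k hh hw

lemma cone_pos {x : Fin d → ℝ} {I : Finset (Fin d)} (hx : ∀ i, 0 < x i)
    (hs : ∑ i ∈ I, x i < 1) {γ} (hγ : γ ∈ cone x I) (i : Idx I) : 0 < γ i := by
  have hne : (Finset.univ : Finset (Idx I)).Nonempty := ⟨i, Finset.mem_univ i⟩
  obtain ⟨i0, _, hmin⟩ := Finset.exists_min_image Finset.univ γ hne
  have hmin' : ∀ j : Idx I, γ i0 ≤ γ j := fun j => hmin j (Finset.mem_univ j)
  have hsI : ∑ j : Idx I, x j.1 = ∑ i ∈ I, x i := by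
    rw [← Finset.sum_coe_sort I x]
  have hlb : γ i0 * (∑ j : Idx I, x j.1) ≤ lin x I γ := by
    rw [Finset.mul_sum]
    exact Finset.sum_le_sum fun j _ => mul_le_mul_of_nonneg_right (hmin' j) (hx _).le
  have h0 : 0 < γ i0 := by
    by_contra hle
    push_neg at hle
    have h1 : γ i0 * 1 ≤ γ i0 * (∑ j : Idx I, x j.1) := by
      apply mul_le_mul_of_nonpos_left _ hle
      rw [hsI]; exact hs.le
    have h2 := hγ i0
    rw [mul_one] at h1
    linarith
  exact lt_of_lt_of_le h0 (hmin' i)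

section Open

lemma continuous_lin (x : Fin d → ℝ) (I : Finset (Fin d)) : Continuous (lin x I) :=
  continuous_finset_sum _ fun j _ => (continuous_apply j).mul continuous_const

lemma isOpen_imp {α : Type*} [TopologicalSpace α] (p : Prop) {s : Set α} (hs : IsOpen s) :
    IsOpen {a | p → a ∈ s} := by
  by_cases hp : p
  · convert hs using 1; ext a; simp [hp]
  · convert isOpen_univ using 1; ext a; simp [hp]

lemma isOpen_cone (x : Fin d → ℝ) (I : Finset (Fin d)) : IsOpen (cone x I) := by
  have : cone x I = ⋂ i : Idx I, {γ | lin x I γ < γ i} := by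
    ext γ; simp [cone, Set.mem_iInter]
  rw [this]
  exact isOpen_iInter_of_finite fun i =>
    isOpen_lt (continuous_lin x I) (continuous_apply i)

lemma isOpen_kmax (x : Fin d → ℝ) (ℓ : Fin d) (I : Finset (Fin d)) (k : Idx I) :
    IsOpen (kmax x ℓ I k) := by
  have : kmax x ℓ I k = cone x I ∩ ⋂ j : Idx I,
      {γ | j.1 ≠ ℓ → γ ∈ {γ | j ≠ k → γ ∈ {γ : Idx I → ℝ | γ j < γ k}}} := by
    ext γ; simp [kmax, Set.mem_iInter]
  rw [this]
  exact (isOpen_cone x I).inter <| isOpen_iInter_of_finite fun j =>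
    isOpen_imp _ <| isOpen_imp _ <| isOpen_lt (continuous_apply j) (continuous_apply k)

lemma isOpen_dset (x : Fin d → ℝ) (ℓ : Fin d) (I : Finset (Fin d)) (k : Idx I) (c : ℝ) :
    IsOpen (dset x ℓ I k c) :=
  (isOpen_kmax x ℓ I k).inter (isOpen_lt (continuous_apply k) continuous_const)

lemma continuous_ins (I : Finset (Fin d)) (k : Idx I) (h : ℝ) :
    Continuous (fun z => ins I k h z) := by
  apply continuous_pi
  intro i
  by_cases hik : i = k
  · subst hik; simp only [ins_self]; exact continuous_const
  · simp only [ins_ne _ _ _ _ hik]; exact continuous_apply _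

lemma isOpen_slice (x : Fin d → ℝ) (ℓ : Fin d) (I : Finset (Fin d)) (k : Idx I) (h : ℝ) :
    IsOpen (slice x ℓ I k h) :=
  (isOpen_kmax x ℓ I k).preimage (continuous_ins I k h)

lemma isOpen_brunPolytope (x : Fin d → ℝ) (ℓ : Fin d) (J : Finset (Fin d)) :
    IsOpen (brunPolytope x ℓ J) := by
  have hc : Continuous fun β : {i // i ∈ J} → ℝ => ∑ j : {i // i ∈ J}, β j * x j.1 :=
    continuous_finset_sum _ fun j _ => (continuous_apply j).mul continuous_const
  have : brunPolytope x ℓ J =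
      (⋂ i : {i // i ∈ J}, {β | i.1 ≠ ℓ → β ∈ {β : {i // i ∈ J} → ℝ | β i < 0}}) ∩
      ((⋂ i : {i // i ∈ J}, {β | (∑ j : {i // i ∈ J}, β j * x j.1) - β i < 1}) ∩
       {β | (∑ j : {i // i ∈ J}, β j * x j.1) < 1}) := by
    ext β; simp [brunPolytope, Set.mem_iInter, and_assoc]
  rw [this]
  refine ((isOpen_iInter_of_finite fun i => isOpen_imp _ ?_).inter
    ((isOpen_iInter_of_finite fun i => ?_).inter ?_))
  · exact isOpen_lt (continuous_apply i) continuous_const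
  · exact isOpen_lt (hc.sub (continuous_apply i)) continuous_const
  · exact isOpen_lt hc continuous_const

end Open


section Fubini

variable {d : ℕ}

noncomputable def F (I : Finset (Fin d)) (k : Idx I) :
    (Idx I → ℝ) ≃ᵐ (ℝ × ({j : Idx I // j ≠ k} → ℝ)) :=
  (MeasurableEquiv.piEquivPiSubtypeProd (fun _ => ℝ) (fun j => j = k)).trans
    ((MeasurableEquiv.funUnique _ ℝ).prodCongr (MeasurableEquiv.refl _))

lemma F_symm_apply (I : Finset (Fin d)) (k : Idx I) (h : ℝ) (z) :
    (F I k).symm (h, z) = ins I k h z := by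
  funext i
  show (MeasurableEquiv.piEquivPiSubtypeProd (fun _ => ℝ) (fun j => j = k)).symm
      (((MeasurableEquiv.funUnique _ ℝ).prodCongr (MeasurableEquiv.refl _)).symm (h, z)) i
      = ins I k h z i
  have h1 : ((MeasurableEquiv.funUnique {j : Idx I // j = k} ℝ).prodCongr
      (MeasurableEquiv.refl ({j : Idx I // j ≠ k} → ℝ))).symm (h, z)
      = (fun _ => h, z) := rfl
  rw [h1]
  show (Equiv.piEquivPiSubtypeProd (fun j => j = k) (fun _ => ℝ)).symm (fun _ => h, z) i
      = ins I k h z i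
  rw [Equiv.piEquivPiSubtypeProd_symm_apply]
  rfl

lemma measurePreserving_F (I : Finset (Fin d)) (k : Idx I) :
    MeasurePreserving (F I k) volume ((volume : Measure ℝ).prod volume) := by
  have h1 : MeasurePreserving
      (MeasurableEquiv.piEquivPiSubtypeProd (fun _ : Idx I => ℝ) (fun j => j = k))
      (Measure.pi fun _ => volume)
      ((Measure.pi fun _ : {j : Idx I // j = k} => (volume : Measure ℝ)).prod
        (Measure.pi fun _ : {j : Idx I // j ≠ k} => (volume : Measure ℝ))) := by
    convert measurePreserving_piEquivPiSubtypeProd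
      (fun _ : Idx I => (volume : Measure ℝ)) (fun j => j = k) using 2 <;> congr!
  have h2 : MeasurePreserving
      ((MeasurableEquiv.funUnique {j : Idx I // j = k} ℝ).prodCongr
        (MeasurableEquiv.refl ({j : Idx I // j ≠ k} → ℝ)))
      ((Measure.pi fun _ : {j : Idx I // j = k} => (volume : Measure ℝ)).prod
        (Measure.pi fun _ : {j : Idx I // j ≠ k} => (volume : Measure ℝ)))
      ((volume : Measure ℝ).prod volume) := by
    convert (measurePreserving_funUnique (volume : Measure ℝ) {j : Idx I // j = k}).prod
      (MeasurePreserving.id (Measure.pi fun _ : {j : Idx I // j ≠ k} =>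
        (volume : Measure ℝ))) using 2 <;> congr!
  exact h2.comp h1

lemma slice_subset_empty {x : Fin d → ℝ} {ℓ : Fin d} {I : Finset (Fin d)} {k : Idx I}
    (hx : ∀ i, 0 < x i) (hs : ∑ i ∈ I, x i < 1) {h : ℝ} (hh : h ≤ 0) :
    slice x ℓ I k h = ∅ := by
  ext z
  simp only [slice, Set.mem_setOf_eq, Set.mem_empty_iff_false, iff_false]
  intro hz
  have := cone_pos hx hs hz.1 k
  rw [ins_self] at this
  linarith

/-- dimension of the slice space -/
lemma card_ne (I : Finset (Fin d)) (k : Idx I) :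
    Fintype.card {j : Idx I // j ≠ k} + 1 = I.card := by
  have h1 : Fintype.card {j : Idx I // j ≠ k} = Fintype.card (Idx I) - 1 := by
    rw [Fintype.card_subtype_compl, Fintype.card_subtype_eq]
  have h2 : Fintype.card (Idx I) = I.card := Fintype.card_coe I
  have h3 : 1 ≤ Fintype.card (Idx I) := Fintype.card_pos_iff.2 ⟨k⟩
  omega

lemma volume_slice (x : Fin d → ℝ) (ℓ : Fin d) (I : Finset (Fin d)) (k : Idx I) {h : ℝ}
    (hh : 0 < h) :
    volume (slice x ℓ I k h)
      = ENNReal.ofReal (h ^ (Fintype.card {j : Idx I // j ≠ k})) * volume (slice x ℓ I k 1) := by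
  rw [slice_smul x ℓ I k hh, Measure.addHaar_smul_of_nonneg volume hh.le,
    Module.finrank_pi ℝ]

lemma volume_dset (x : Fin d → ℝ) (ℓ : Fin d) (I : Finset (Fin d)) (k : Idx I) {c : ℝ}
    (hc : 0 < c) (hx : ∀ i, 0 < x i) (hs : ∑ i ∈ I, x i < 1) :
    volume (dset x ℓ I k c)
      = ENNReal.ofReal (c ^ (Fintype.card {j : Idx I // j ≠ k} + 1)
          / (Fintype.card {j : Idx I // j ≠ k} + 1)) * volume (slice x ℓ I k 1) := by
  set m := Fintype.card {j : Idx I // j ≠ k} with hm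
  set V := volume (slice x ℓ I k 1) with hV
  have hmp := (measurePreserving_F I k).symm
  have h1 : volume (dset x ℓ I k c)
      = ((volume : Measure ℝ).prod volume) ((F I k).symm ⁻¹' dset x ℓ I k c) :=
    (hmp.measure_preimage_equiv _).symm
  have h2 : ((F I k).symm ⁻¹' dset x ℓ I k c)
      = {q : ℝ × ({j : Idx I // j ≠ k} → ℝ) | ins I k q.1 q.2 ∈ dset x ℓ I k c} := by
    ext ⟨h, z⟩
    simp only [Set.mem_preimage, Set.mem_setOf_eq, F_symm_apply]
  have hmeas : MeasurableSet {q : ℝ × ({j : Idx I // j ≠ k} → ℝ) |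
      ins I k q.1 q.2 ∈ dset x ℓ I k c} := by
    rw [← h2]
    exact (F I k).symm.measurable (isOpen_dset x ℓ I k c).measurableSet
  rw [h1, h2, Measure.prod_apply hmeas]
  have h3 : ∀ h : ℝ, volume (Prod.mk h ⁻¹' {q : ℝ × ({j : Idx I // j ≠ k} → ℝ) |
        ins I k q.1 q.2 ∈ dset x ℓ I k c})
      = Set.indicator (Set.Ioo 0 c) (fun h => ENNReal.ofReal (h ^ m) * V) h := by
    intro h
    have hpre : (Prod.mk h ⁻¹' {q : ℝ × ({j : Idx I // j ≠ k} → ℝ) |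
          ins I k q.1 q.2 ∈ dset x ℓ I k c})
        = if h < c then slice x ℓ I k h else ∅ := by
      ext z
      by_cases hhc : h < c <;>
        simp [dset, slice, hhc, Set.mem_setOf_eq]
    rw [hpre]
    by_cases h0 : h ∈ Set.Ioo 0 c
    · rw [Set.indicator_of_mem h0, if_pos h0.2, volume_slice x ℓ I k h0.1]
    · rw [Set.indicator_of_notMem h0]
      simp only [Set.mem_Ioo, not_and_or, not_lt] at h0
      rcases h0 with h0 | h0
      · by_cases hhc : h < c
        · rw [if_pos hhc, slice_subset_empty hx hs h0]; simp
        · rw [if_neg hhc]; simp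
      · rw [if_neg (not_lt.2 h0)]; simp
  simp_rw [h3]
  rw [lintegral_indicator measurableSet_Ioo]
  have h4 : ∫⁻ h in Set.Ioo 0 c, ENNReal.ofReal (h ^ m) * V
      = (∫⁻ h in Set.Ioo 0 c, ENNReal.ofReal (h ^ m)) * V := by
    rw [lintegral_mul_const]
    exact (measurable_id.pow_const m).ennreal_ofReal
  rw [h4]
  congr 1
  have hint : IntegrableOn (fun h : ℝ => h ^ m) (Set.Ioo 0 c) volume := by
    have := (intervalIntegral.intervalIntegrable_pow m (a := 0) (b := c) (μ := volume))
    rw [intervalIntegrable_iff_integrableOn_Ioc_of_le hc.le] at this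
    exact this.mono_set Set.Ioo_subset_Ioc_self
  rw [← ofReal_integral_eq_lintegral_ofReal hint]
  · congr 1
    rw [← MeasureTheory.integral_Ioc_eq_integral_Ioo,
      ← intervalIntegral.integral_of_le hc.le, integral_pow]
    simp
  · exact MeasureTheory.ae_restrict_of_forall_mem measurableSet_Ioo
      (fun h hh => pow_nonneg hh.1.le m)

end Fubini


section Face

variable {d : ℕ}

def eNe (I : Finset (Fin d)) (k : Idx I) : {j : Idx I // j ≠ k} ≃ {i // i ∈ I.erase k.1} where
  toFun j := ⟨j.1.1, Finset.mem_erase.2 ⟨fun hv => j.2 (Subtype.ext hv), j.1.2⟩⟩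
  invFun i := ⟨⟨i.1, Finset.mem_of_mem_erase i.2⟩,
    fun he => (Finset.mem_erase.1 i.2).1 (congrArg Subtype.val he)⟩
  left_inv j := by ext; rfl
  right_inv i := by ext; rfl

lemma sum_ne_eq (I : Finset (Fin d)) (k : Idx I) (g : {i // i ∈ I.erase k.1} → ℝ) :
    ∑ j : {j : Idx I // j ≠ k}, g (eNe I k j) = ∑ i : {i // i ∈ I.erase k.1}, g i :=
  Fintype.sum_equiv (eNe I k) _ _ (fun _ => rfl)

lemma sum_x_ne (x : Fin d → ℝ) (I : Finset (Fin d)) (k : Idx I) :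
    ∑ j : {j : Idx I // j ≠ k}, x j.1.1 = (∑ i ∈ I, x i) - x k.1 := by
  have h1 : ∑ j : Idx I, x j.1 = ∑ i ∈ I, x i := by rw [← Finset.sum_coe_sort I x]
  have h2 := sum_split k (fun j : Idx I => x j.1)
  rw [h1] at h2
  linarith

lemma slice_eq_face (x : Fin d → ℝ) (ℓ : Fin d) (I : Finset (Fin d)) (k : Idx I)
    (hx : ∀ i, 0 < x i) (hs : ∑ i ∈ I, x i < 1) (hkl : k.1 ≠ ℓ) :
    volume (slice x ℓ I k (1 - ∑ i ∈ I, x i)⁻¹)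
      = volume (brunPolytope x ℓ (I.erase k.1)) := by
  set s := ∑ i ∈ I, x i with hsdef
  set c := (1 - s)⁻¹ with hcdef
  have hs1 : (0:ℝ) < 1 - s := by linarith
  have hc : 0 < c := inv_pos.2 hs1
  have hkey : c * (1 - s) = 1 := inv_mul_cancel₀ hs1.ne'
  have hkey' : c - c * s = 1 := by rw [mul_one_sub] at hkey; linarith
  -- reindexing measurable equiv
  set me := MeasurableEquiv.piCongrLeft (fun _ : {i // i ∈ I.erase k.1} => ℝ)
    (eNe I k) with hme
  have hmp : MeasurePreserving me volume volume :=
    volume_measurePreserving_piCongrLeft _ _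
  have h1 : volume (slice x ℓ I k c) = volume (me.symm ⁻¹' slice x ℓ I k c) :=
    ((MeasurePreserving.symm me hmp).measure_preimage_equiv _).symm
  have hsymm : ∀ w : {i // i ∈ I.erase k.1} → ℝ, ∀ j : {j : Idx I // j ≠ k},
      me.symm w j = w (eNe I k j) := by
    intro w j
    rw [hme]
    exact Equiv.piCongrLeft_symm_apply _ _ _ _
  -- the translated set
  have h2 : me.symm ⁻¹' slice x ℓ I k c
      = (fun w => (fun _ => -c) + w) ⁻¹' brunPolytope x ℓ (I.erase k.1) := by
    ext w
    have hzw : ∀ j : {j : Idx I // j ≠ k}, me.symm w j = w (eNe I k j) := hsymm w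
    simp only [Set.mem_preimage]
    have hT : ∑ j : {j : Idx I // j ≠ k}, me.symm w j * x j.1.1
        = ∑ i : {i // i ∈ I.erase k.1}, w i * x i.1 :=
      Fintype.sum_equiv (eNe I k) _ _ (fun j => by rw [hzw j]; rfl)
    set T := ∑ i : {i // i ∈ I.erase k.1}, w i * x i.1 with hTdef
    have hSsum : (∑ j : {i // i ∈ I.erase k.1},
        (((fun _ => -c) : {i // i ∈ I.erase k.1} → ℝ) + w) j * x j.1)
        = T - c * s + c * x k.1 := by
      have hst : ∀ j : {i // i ∈ I.erase k.1},
          (((fun _ => -c) : {i // i ∈ I.erase k.1} → ℝ) + w) j * x j.1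
          = w j * x j.1 - c * x j.1 := by intro j; simp only [Pi.add_apply]; ring
      rw [Finset.sum_congr rfl (fun j _ => hst j), Finset.sum_sub_distrib, ← Finset.mul_sum]
      have hxE : ∑ i : {i // i ∈ I.erase k.1}, x i.1 = s - x k.1 := by
        rw [← sum_x_ne x I k]
        exact (Fintype.sum_equiv (eNe I k) (fun j : {j : Idx I // j ≠ k} => x j.1.1)
          (fun i : {i // i ∈ I.erase k.1} => x i.1) (fun j => rfl)).symm
      rw [hxE]; ring
    have hlin : lin x I (ins I k c (me.symm w)) = T + c * x k.1 := by
      rw [lin_ins, hT]; ring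
    constructor
    · rintro ⟨hcone, hmax⟩
      refine ⟨?_, ?_, ?_⟩
      · intro i hil
        have hik : (⟨i.1, Finset.mem_of_mem_erase i.2⟩ : Idx I) ≠ k :=
          fun he => (Finset.mem_erase.1 i.2).1 (congrArg Subtype.val he)
        have := hmax ⟨i.1, Finset.mem_of_mem_erase i.2⟩ hil hik
        rw [ins_ne _ _ _ _ hik, hzw ⟨_, hik⟩, ins_self] at this
        have heq : eNe I k ⟨⟨i.1, Finset.mem_of_mem_erase i.2⟩, hik⟩ = i :=
          Subtype.ext rfl
        rw [heq] at this
        simp only [Pi.add_apply]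
        linarith
      · intro i
        rw [hSsum]
        have hik : (⟨i.1, Finset.mem_of_mem_erase i.2⟩ : Idx I) ≠ k :=
          fun he => (Finset.mem_erase.1 i.2).1 (congrArg Subtype.val he)
        have := hcone ⟨i.1, Finset.mem_of_mem_erase i.2⟩
        rw [hlin, ins_ne _ _ _ _ hik, hzw ⟨_, hik⟩] at this
        have heq : eNe I k ⟨⟨i.1, Finset.mem_of_mem_erase i.2⟩, hik⟩ = i :=
          Subtype.ext rfl
        rw [heq] at this
        simp only [Pi.add_apply]
        linarith
      · rw [hSsum]
        have := hcone k
        rw [hlin, ins_self] at this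
        linarith
    · rintro ⟨hb1, hb2, hb3⟩
      constructor
      · intro i
        rw [hlin]
        by_cases hik : i = k
        · subst hik
          rw [ins_self]
          have := hb3
          rw [hSsum] at this
          linarith
        · rw [ins_ne _ _ _ _ hik, hzw ⟨i, hik⟩]
          have := hb2 (eNe I k ⟨i, hik⟩)
          rw [hSsum] at this
          simp only [Pi.add_apply] at this
          linarith
      · intro j hjl hjk
        rw [ins_ne _ _ _ _ hjk, hzw ⟨j, hjk⟩, ins_self]
        have := hb1 (eNe I k ⟨j, hjk⟩) hjl
        simp only [Pi.add_apply] at this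
        linarith
  rw [h1, h2, measure_preimage_add]

end Face

section Assembly

variable {d : ℕ}

lemma volume_pairs_null (I : Finset (Fin d)) :
    volume (⋃ (j : Idx I) (j' : Idx I) (_ : j ≠ j'), {γ : Idx I → ℝ | γ j = γ j'}) = 0 := by
  refine measure_iUnion_null fun j => measure_iUnion_null fun j' => measure_iUnion_null fun hjj' => ?_
  have hker : {γ : Idx I → ℝ | γ j = γ j'}
      = (LinearMap.ker ((LinearMap.proj j : (Idx I → ℝ) →ₗ[ℝ] ℝ) - LinearMap.proj j') : Set _) := by
    ext γ
    simp [LinearMap.mem_ker, sub_eq_zero]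
  rw [hker]
  apply Measure.addHaar_submodule
  intro htop
  have hv : (Pi.single j (1:ℝ) : Idx I → ℝ) ∈
      LinearMap.ker ((LinearMap.proj j : (Idx I → ℝ) →ₗ[ℝ] ℝ) - LinearMap.proj j') := by
    rw [htop]; trivial
  rw [LinearMap.mem_ker] at hv
  simp only [LinearMap.sub_apply, LinearMap.proj_apply, Pi.single_eq_same,
    Pi.single_eq_of_ne (Ne.symm hjj')] at hv
  norm_num at hv

lemma brunPolytope_eq_lin (x : Fin d → ℝ) (ℓ : Fin d) (I : Finset (Fin d)) :
    brunPolytope x ℓ I = {β : Idx I → ℝ | (∀ i : Idx I, i.1 ≠ ℓ → β i < 0) ∧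
      (∀ i : Idx I, lin x I β - β i < 1) ∧ lin x I β < 1} := rfl

lemma volume_gset (x : Fin d → ℝ) (ℓ : Fin d) (I : Finset (Fin d)) (hℓ : ℓ ∈ I)
    (hI : 2 ≤ I.card) (hs : ∑ i ∈ I, x i < 1) :
    volume (gset x ℓ I (1 - ∑ i ∈ I, x i)⁻¹) = volume (brunPolytope x ℓ I) := by
  set s := ∑ i ∈ I, x i with hsdef
  set c := (1 - s)⁻¹ with hcdef
  have hs1 : (0:ℝ) < 1 - s := by linarith
  have hkey : c * (1 - s) = 1 := inv_mul_cancel₀ hs1.ne'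
  have hkey' : c - c * s = 1 := by rw [mul_one_sub] at hkey; linarith
  have hsι : ∑ j : Idx I, x j.1 = s := Finset.sum_coe_sort I x
  -- erase ℓ is nonempty
  have hne : (I.erase ℓ).Nonempty := by
    rw [← Finset.card_pos, Finset.card_erase_of_mem hℓ]
    omega
  obtain ⟨k0, hk0⟩ := hne
  have heq : gset x ℓ I c = (fun γ => (fun _ => -c) + γ) ⁻¹' brunPolytope x ℓ I := by
    ext γ
    rw [Set.mem_preimage, brunPolytope_eq_lin]
    have hsum2 : lin x I ((fun _ => -c) + γ) = lin x I γ - c * s := by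
      unfold lin
      have hst : ∀ j : Idx I, (((fun _ => -c) : Idx I → ℝ) + γ) j * x j.1
          = γ j * x j.1 - c * x j.1 := fun j => by simp only [Pi.add_apply]; ring
      rw [Finset.sum_congr rfl (fun j _ => hst j), Finset.sum_sub_distrib, ← Finset.mul_sum, hsι]
    simp only [Set.mem_setOf_eq, hsum2, Pi.add_apply]
    constructor
    · rintro ⟨hcone, hbd⟩
      refine ⟨fun i hi => by linarith [hbd i hi], fun i => by linarith [hcone i], ?_⟩
      have hj0 : (⟨k0, Finset.mem_of_mem_erase hk0⟩ : Idx I).1 ≠ ℓ :=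
        (Finset.mem_erase.1 hk0).1
      have h1 := hcone ⟨k0, Finset.mem_of_mem_erase hk0⟩
      have h2 := hbd _ hj0
      linarith
    · rintro ⟨hb1, hb2, _⟩
      exact ⟨fun i => by linarith [hb2 i], fun i hi => by linarith [hb1 i hi]⟩
  rw [heq, measure_preimage_add]

lemma dset_subset_gset (x : Fin d → ℝ) (ℓ : Fin d) (I : Finset (Fin d)) (k : Idx I) (c : ℝ)
    (hkl : k.1 ≠ ℓ) : dset x ℓ I k c ⊆ gset x ℓ I c := by
  rintro γ ⟨⟨hcone, hmax⟩, hkc⟩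
  refine ⟨hcone, fun i hi => ?_⟩
  by_cases hik : i = k
  · subst hik; exact hkc
  · exact (hmax i hi hik).trans hkc

end Assembly

end Brun19
open Brun19 in
/-- The pyramid-decomposition recursion for the volumes of the Brun polytopes:
`Vol(P_{I,ℓ}) = (1/(|I|(1 - ∑_{i∈I} x_i))) · ∑_{k∈I∖{ℓ}} Vol(P_{I∖{k},ℓ})`. -/
theorem stmt_19 (d : ℕ) (hd : 1 ≤ d) (I : Finset (Fin d)) (hI : 2 ≤ I.card)
    (ℓ : Fin d) (hℓ : ℓ ∈ I) (x : Fin d → ℝ) (hx : ∀ i, 0 < x i)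
    (hsum : ∑ i, x i = 1) (hIlt : ∑ i ∈ I, x i < 1) :
    volume (brunPolytope x ℓ I) =
      ENNReal.ofReal (1 / (I.card * (1 - ∑ i ∈ I, x i))) *
        ∑ k ∈ I.erase ℓ, volume (brunPolytope x ℓ (I.erase k)) := by
  classical
  set s := ∑ i ∈ I, x i with hsdef
  set c := (1 - s)⁻¹ with hcdef
  have hs1 : (0:ℝ) < 1 - s := by linarith
  have hc : 0 < c := inv_pos.2 hs1
  set D' : Fin d → Set (Idx I → ℝ) :=
    fun a => if ha : a ∈ I then dset x ℓ I ⟨a, ha⟩ c else ∅ with hD'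
  set N := ⋃ (j : Idx I) (j' : Idx I) (_ : j ≠ j'), {γ : Idx I → ℝ | γ j = γ j'} with hN
  have hNnull : volume N = 0 := volume_pairs_null I
  -- union of the dsets is contained in gset
  have hU_sub : (⋃ a ∈ I.erase ℓ, D' a) ⊆ gset x ℓ I c := by
    intro γ hγ
    rw [Set.mem_iUnion₂] at hγ
    obtain ⟨a, ha, hγa⟩ := hγ
    have haI : a ∈ I := Finset.mem_of_mem_erase ha
    rw [hD'] at hγa
    simp only [dif_pos haI] at hγa
    exact dset_subset_gset x ℓ I ⟨a, haI⟩ c (Finset.mem_erase.1 ha).1 hγa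
  -- gset is covered by the dsets together with the null set
  have hcover : gset x ℓ I c ⊆ (⋃ a ∈ I.erase ℓ, D' a) ∪ N := by
    intro γ hγ
    by_cases hγN : γ ∈ N
    · exact Or.inr hγN
    left
    have hne : (I.erase ℓ).Nonempty := by
      rw [← Finset.card_pos, Finset.card_erase_of_mem hℓ]; omega
    obtain ⟨k0, hk0⟩ := hne
    set T : Finset (Idx I) := Finset.univ.filter (fun j : Idx I => j.1 ≠ ℓ) with hT
    have hTne : T.Nonempty := by
      refine ⟨⟨k0, Finset.mem_of_mem_erase hk0⟩, ?_⟩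
      rw [hT, Finset.mem_filter]
      exact ⟨Finset.mem_univ _, (Finset.mem_erase.1 hk0).1⟩
    obtain ⟨k', hk'T, hmax⟩ := Finset.exists_max_image T γ hTne
    have hk'l : k'.1 ≠ ℓ := (Finset.mem_filter.1 hk'T).2
    rw [Set.mem_iUnion₂]
    refine ⟨k'.1, Finset.mem_erase.2 ⟨hk'l, k'.2⟩, ?_⟩
    rw [hD']
    simp only [dif_pos k'.2]
    refine ⟨⟨hγ.1, fun j hjl hjk => ?_⟩, hγ.2 k' hk'l⟩
    have hle : γ j ≤ γ k' := by
      apply hmax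
      rw [hT, Finset.mem_filter]
      exact ⟨Finset.mem_univ _, hjl⟩
    rcases lt_or_eq_of_le hle with hlt | heq
    · exact hlt
    · exfalso
      apply hγN
      rw [hN, Set.mem_iUnion]
      exact ⟨j, Set.mem_iUnion.2 ⟨k', Set.mem_iUnion.2 ⟨hjk, heq⟩⟩⟩
  have hvolU : volume (gset x ℓ I c) = volume (⋃ a ∈ I.erase ℓ, D' a) := by
    apply le_antisymm
    · calc volume (gset x ℓ I c) ≤ volume ((⋃ a ∈ I.erase ℓ, D' a) ∪ N) := measure_mono hcover
        _ ≤ volume (⋃ a ∈ I.erase ℓ, D' a) + volume N := measure_union_le _ _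
        _ = volume (⋃ a ∈ I.erase ℓ, D' a) := by rw [hNnull, add_zero]
    · exact measure_mono hU_sub
  -- disjointness
  have hdisj : (↑(I.erase ℓ) : Set (Fin d)).PairwiseDisjoint D' := by
    intro a ha b hb hab
    simp only [Finset.coe_mem, Finset.mem_coe] at ha hb
    have haI : a ∈ I := Finset.mem_of_mem_erase ha
    have hbI : b ∈ I := Finset.mem_of_mem_erase hb
    refine Set.disjoint_left.2 fun γ hγa hγb => ?_
    rw [hD'] at hγa hγb
    simp only [dif_pos haI] at hγa
    simp only [dif_pos hbI] at hγb
    have h1 : γ ⟨b, hbI⟩ < γ ⟨a, haI⟩ :=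
      hγa.1.2 ⟨b, hbI⟩ (Finset.mem_erase.1 hb).1 (fun he => hab (congrArg Subtype.val he).symm)
    have h2 : γ ⟨a, haI⟩ < γ ⟨b, hbI⟩ :=
      hγb.1.2 ⟨a, haI⟩ (Finset.mem_erase.1 ha).1 (fun he => hab (congrArg Subtype.val he))
    linarith
  have hmeasD : ∀ b ∈ I.erase ℓ, MeasurableSet (D' b) := by
    intro b hb
    rw [hD']
    by_cases hbI : b ∈ I
    · simp only [dif_pos hbI]; exact (isOpen_dset x ℓ I ⟨b, hbI⟩ c).measurableSet
    · simp only [dif_neg hbI]; exact MeasurableSet.empty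
  have hsum' : volume (⋃ a ∈ I.erase ℓ, D' a) = ∑ a ∈ I.erase ℓ, volume (D' a) :=
    measure_biUnion_finset hdisj hmeasD
  -- each term
  have hterm : ∀ a ∈ I.erase ℓ, volume (D' a)
      = ENNReal.ofReal (1 / (I.card * (1 - s))) * volume (brunPolytope x ℓ (I.erase a)) := by
    intro a ha
    have haI : a ∈ I := Finset.mem_of_mem_erase ha
    set k : Idx I := ⟨a, haI⟩ with hk
    set m := Fintype.card {j : Idx I // j ≠ k} with hm
    have hm1 : m + 1 = I.card := card_ne I k
    have hface : volume (brunPolytope x ℓ (I.erase a))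
        = ENNReal.ofReal (c ^ m) * volume (slice x ℓ I k 1) := by
      have h1 := slice_eq_face x ℓ I k hx hIlt (Finset.mem_erase.1 ha).1
      rw [← hcdef] at h1
      rw [← h1, volume_slice x ℓ I k hc]
    rw [hD']
    simp only [dif_pos haI]
    rw [← hk, volume_dset x ℓ I k hc hx hIlt, ← hm, hface, ← mul_assoc,
      ← ENNReal.ofReal_mul (by positivity)]
    congr 2
    have hcard : ((m:ℝ) + 1) = (I.card : ℝ) := by exact_mod_cast hm1
    rw [pow_succ, hcdef, ← hcard]
    field_simp
  -- put everything together
  calc volume (brunPolytope x ℓ I)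
      = volume (gset x ℓ I c) := by
        rw [hcdef, hsdef]; exact (volume_gset x ℓ I hℓ hI hIlt).symm
    _ = ∑ a ∈ I.erase ℓ, volume (D' a) := by rw [hvolU, hsum']
    _ = ∑ a ∈ I.erase ℓ, ENNReal.ofReal (1 / (I.card * (1 - s)))
          * volume (brunPolytope x ℓ (I.erase a)) := Finset.sum_congr rfl hterm
    _ = ENNReal.ofReal (1 / (I.card * (1 - s)))
          * ∑ k ∈ I.erase ℓ, volume (brunPolytope x ℓ (I.erase k)) := by
        rw [Finset.mul_sum]
end
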